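/- arXiv:2408.11474 — 6 statements merged into one kernel-verified Lean document; each statement's English description precedes it below -/
import Mathlib

section
/- Let ν be any Borel probability measure on End(E). Then there exist an integer r ≥ 0 and constants C > 0, β > 0 such that for every n ∈ ℕ: ℙ( rank(γ̄_n) < r ) = 0 and ℙ( rank(γ̄_n) > r ) ≤ C·exp(−β·n). In particular, almost surely rank(γ̄_n) = r for all sufficiently large n. -/
open MeasureTheory Filter Topology
open scoped ENNReal NNReal

attribute [local instance] Classical.propDecidable

noncomputable section

variable {E : Type*} [NormedAddCommGroup E] [InnerProductSpace ℝ E]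
variable {F : Type*} [NormedAddCommGroup F] [InnerProductSpace ℝ F]

/-- The second singular value of a linear map between inner product spaces. -/
def secondSing (h : E →L[ℝ] F) : ℝ :=
  ⨆ P : {P : Submodule ℝ E // Module.finrank ℝ P = 2},
    ⨅ x : {x : E // x ∈ P.1 ∧ ‖x‖ = 1}, ‖h x.1‖

/-- The squeeze coefficient (logarithmic singular gap) of a linear map, in `[0,∞]`. -/
def sqz (h : E →L[ℝ] F) : ℝ≥0∞ :=
  if h = 0 then 0
  else if secondSing h = 0 then ⊤
  else ENNReal.ofReal (Real.log (‖h‖ / secondSing h))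

/-- Projective distance between the lines `[x]` and `[y]`. -/
def projDist (x y : E) : ℝ := (⨅ a : ℝ, ‖x - a • y‖) / ‖x‖

/-- The set `U^ε(h) = h (V^ε(h))`. -/
def Uset (ε : ℝ) (h : E →L[ℝ] F) : Set F :=
  h '' {x : E | ε * (‖h‖ * ‖x‖) ≤ ‖h x‖}

/-- `exp (-x)` for `x ∈ [0,∞]`, with `exp (-∞) = 0`. -/
def expNeg (x : ℝ≥0∞) : ℝ := if x = ⊤ then 0 else Real.exp (-x.toReal)

/-- Quantitative proximality `prox g = liminf sqz (g^m) / m`. -/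
def prox (g : E →L[ℝ] E) : ℝ≥0∞ :=
  Filter.atTop.liminf fun m : ℕ => sqz (g ^ m) / (m : ℝ≥0∞)

/-- The spectral radius `ρ₁ g = liminf ‖g^m‖^(1/m)`. -/
def rho1 (g : E →L[ℝ] E) : ℝ :=
  Filter.atTop.liminf fun m : ℕ => ‖g ^ m‖ ^ ((m : ℝ)⁻¹)

/-- `N g = log ‖g‖ + log ‖g⁻¹‖` (using `Ring.inverse`). -/
def Nfun (g : E →L[ℝ] E) : ℝ := Real.log ‖g‖ + Real.log ‖Ring.inverse g‖

/-- The left-to-right product `γ̄ₙ = γ₀ ⋯ γ_{n-1}`. -/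
def wprod (n : ℕ) (ω : ℕ → E →L[ℝ] E) : E →L[ℝ] E := ((List.range n).map ω).prod

variable [MeasurableSpace (E →L[ℝ] E)]

/-- `n`-fold convolution power `ν^{*n}` (law of `γ₀ ⋯ γ_{n-1}` for i.i.d. `γᵢ ∼ ν`). -/
def convPow (ν : Measure (E →L[ℝ] E)) : ℕ → Measure (E →L[ℝ] E)
  | 0 => Measure.dirac 1
  | n + 1 => (ν.prod (convPow ν n)).map fun p => p.1 * p.2

/-- Strong irreducibility of a measure on `End(E)`. -/
def StronglyIrreducible (ν : Measure (E →L[ℝ] E)) : Prop :=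
  (∀ (N : ℕ) (f : Fin (N + 1) → (E →L[ℝ] ℝ)) (v : E), (∀ i, f i ≠ 0) → v ≠ 0 →
      ∃ n : ℕ, 0 < convPow ν n {γ | (∏ i, f i (γ v)) ≠ 0}) ∧
  (∀ (N : ℕ) (f : E →L[ℝ] ℝ) (v : Fin (N + 1) → E), f ≠ 0 → (∀ j, v j ≠ 0) →
      ∃ n : ℕ, 0 < convPow ν n {γ | (∏ j, f (γ (v j))) ≠ 0})

/-- Proximality of a measure on `End(E)`. -/
def ProximalMeasure (ν : Measure (E →L[ℝ] E)) : Prop :=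
  (∀ n : ℕ, convPow ν n ({0} : Set (E →L[ℝ] E)) = 0) ∧
  ∃ n : ℕ, 0 < convPow ν n {γ | 0 < prox γ}

/-- `μ` is the law of an i.i.d. sequence of step distribution `ν`, i.e. `μ = ν^{⊗ℕ}`. -/
def IsIIDOf {A : Type*} [MeasurableSpace A] (μ : Measure (ℕ → A)) (ν : Measure A) : Prop :=
  ∀ (n : ℕ) (s : Fin n → Set A), (∀ i, MeasurableSet (s i)) →
    μ {ω | ∀ i : Fin n, ω i ∈ s i} = ∏ i, ν (s i)

end


noncomputable section RankStabilizationAux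

open MeasureTheory

variable {E : Type*} [NormedAddCommGroup E] [InnerProductSpace ℝ E] [FiniteDimensional ℝ E]

/-- The ordered product of a finite tuple of endomorphisms. -/
def fprodAux {n : ℕ} (x : Fin n → (E →L[ℝ] E)) : E →L[ℝ] E := (List.ofFn x).prod

lemma continuous_fprodAux (n : ℕ) :
    Continuous fun x : Fin n → E →L[ℝ] E => fprodAux x := by
  induction n with
  | zero => simpa [fprodAux] using continuous_const
  | succ n ih =>
    have h : (fun x : Fin (n+1) → E →L[ℝ] E => fprodAux x)
        = fun x => x 0 * fprodAux (fun i : Fin n => x i.succ) := by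
      funext x; simp [fprodAux, List.ofFn_succ]
    rw [h]
    exact (continuous_apply 0).mul (ih.comp (continuous_pi fun i => continuous_apply i.succ))

lemma wprod_eq_fprodAux (n : ℕ) (ω : ℕ → E →L[ℝ] E) :
    wprod n ω = fprodAux (fun i : Fin n => ω i) := by
  unfold wprod fprodAux
  rw [List.ofFn_eq_map, show List.range n = (List.finRange n).map Fin.val from
    List.ext_getElem (by simp) (by simp), List.map_map]
  rfl

lemma fprodAux_append {a b : ℕ} (y : Fin a → E →L[ℝ] E) (z : Fin b → E →L[ℝ] E) :
    fprodAux (Fin.append y z) = fprodAux y * fprodAux z := by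
  unfold fprodAux
  rw [List.ofFn_add, List.prod_append,
    show (fun i => Fin.append y z (Fin.castLE (Nat.le_add_right a b) i)) = y from
      funext fun i => Fin.append_left y z i,
    show (fun j => Fin.append y z (Fin.natAdd a j)) = z from
      funext fun j => Fin.append_right y z j]

lemma measurableSet_rank_gtAux [MeasurableSpace (E →L[ℝ] E)] [BorelSpace (E →L[ℝ] E)] (k : ℕ) :
    MeasurableSet {g : E →L[ℝ] E | k < Module.finrank ℝ (LinearMap.range (g : E →ₗ[ℝ] E))} := by
  have h := (isOpen_setOf_nat_le_rank (𝕜 := ℝ) (E := E) (F := E) (k+1)).measurableSet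
  convert h using 1
  ext g
  simp only [Set.mem_setOf_eq]
  have hr : LinearMap.range (↑g : E →ₗ[ℝ] E) = LinearMap.range (g : E →ₗ[ℝ] E) := rfl
  rw [LinearMap.rank, hr, ← Module.finrank_eq_rank, Nat.cast_le]
  constructor <;> intro <;> omega

lemma rank_mul_le_leftAux (g h : E →L[ℝ] E) :
    Module.finrank ℝ (LinearMap.range ((g * h : E →L[ℝ] E) : E →ₗ[ℝ] E)) ≤ Module.finrank ℝ (LinearMap.range (g : E →ₗ[ℝ] E)) := by
  apply Submodule.finrank_mono
  intro x hx
  obtain ⟨y, rfl⟩ := LinearMap.mem_range.mp hx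
  exact LinearMap.mem_range.mpr ⟨h y, (ContinuousLinearMap.mul_apply g h y).symm⟩

lemma rank_mul_le_rightAux (g h : E →L[ℝ] E) :
    Module.finrank ℝ (LinearMap.range ((g * h : E →L[ℝ] E) : E →ₗ[ℝ] E)) ≤ Module.finrank ℝ (LinearMap.range (h : E →ₗ[ℝ] E)) := by
  have hmap : LinearMap.range ((g * h : E →L[ℝ] E) : E →ₗ[ℝ] E) = Submodule.map (↑g : E →ₗ[ℝ] E) (LinearMap.range (h : E →ₗ[ℝ] E)) := by
    ext x
    simp only [LinearMap.mem_range, Submodule.mem_map, ContinuousLinearMap.mul_apply,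
      ContinuousLinearMap.coe_coe]
    constructor
    · rintro ⟨y, rfl⟩; exact ⟨h y, ⟨y, rfl⟩, rfl⟩
    · rintro ⟨z, ⟨y, rfl⟩, rfl⟩; exact ⟨y, rfl⟩
  rw [hmap]
  exact Submodule.finrank_map_le _ _

lemma rank_oneAux :
    Module.finrank ℝ (LinearMap.range ((1 : E →L[ℝ] E) : E →ₗ[ℝ] E)) = Module.finrank ℝ E := by
  have h : LinearMap.range ((1 : E →L[ℝ] E) : E →ₗ[ℝ] E) = ⊤ :=
    LinearMap.range_eq_top.mpr fun x => ⟨x, rfl⟩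
  rw [h, finrank_top]

variable [MeasurableSpace (E →L[ℝ] E)] [BorelSpace (E →L[ℝ] E)]

lemma measurable_restrAux (n : ℕ) :
    Measurable fun (ω : ℕ → E →L[ℝ] E) (i : Fin n) => ω (i : ℕ) :=
  measurable_pi_lambda _ fun _ => measurable_pi_apply _

lemma map_restrAux (ν : Measure (E →L[ℝ] E)) [IsProbabilityMeasure ν]
    (μ : Measure (ℕ → E →L[ℝ] E)) (hμ : IsIIDOf μ ν) (n : ℕ) :
    μ.map (fun ω (i : Fin n) => ω (i : ℕ)) = Measure.pi (fun _ : Fin n => ν) := by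
  refine (Measure.pi_eq fun s hs => ?_).symm
  rw [Measure.map_apply (measurable_restrAux n) (MeasurableSet.univ_pi hs)]
  have hpre : (fun (ω : ℕ → E →L[ℝ] E) (i : Fin n) => ω (i : ℕ)) ⁻¹' (Set.univ.pi s)
      = {ω | ∀ i : Fin n, ω (i : ℕ) ∈ s i} := by
    ext ω; simp [Set.mem_pi]
  rw [hpre]
  exact hμ n s hs

lemma measurable_appendAux (a b : ℕ) :
    Measurable fun p : (Fin a → E →L[ℝ] E) × (Fin b → E →L[ℝ] E) => Fin.append p.1 p.2 := by
  refine measurable_pi_lambda _ fun j => ?_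
  refine Fin.addCases (motive := fun j => Measurable fun
      p : (Fin a → E →L[ℝ] E) × (Fin b → E →L[ℝ] E) => Fin.append p.1 p.2 j)
    (fun i => ?_) (fun i => ?_) j
  · simp only [Fin.append_left]; exact (measurable_pi_apply i).comp measurable_fst
  · simp only [Fin.append_right]; exact (measurable_pi_apply i).comp measurable_snd

lemma map_appendAux (ν : Measure (E →L[ℝ] E)) [IsProbabilityMeasure ν] (a b : ℕ) :
    ((Measure.pi fun _ : Fin a => ν).prod (Measure.pi fun _ : Fin b => ν)).map
      (fun p => Fin.append p.1 p.2) = Measure.pi (fun _ : Fin (a + b) => ν) := by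
  refine (Measure.pi_eq fun s hs => ?_).symm
  rw [Measure.map_apply (measurable_appendAux a b) (MeasurableSet.univ_pi hs)]
  have hpre : (fun p : (Fin a → E →L[ℝ] E) × (Fin b → E →L[ℝ] E) =>
        Fin.append p.1 p.2) ⁻¹' Set.univ.pi s
      = (Set.univ.pi fun i : Fin a => s (Fin.castAdd b i)) ×ˢ
        (Set.univ.pi fun i : Fin b => s (Fin.natAdd a i)) := by
    ext ⟨y, z⟩
    simp only [Set.mem_preimage, Set.mem_univ_pi, Set.mem_prod]
    constructor
    · intro hj
      refine ⟨fun i => ?_, fun i => ?_⟩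
      · simpa only [Fin.append_left] using hj (Fin.castAdd b i)
      · simpa only [Fin.append_right] using hj (Fin.natAdd a i)
    · rintro ⟨h1, h2⟩ j
      refine Fin.addCases (motive := fun j => Fin.append y z j ∈ s j)
        (fun i => ?_) (fun i => ?_) j
      · simpa only [Fin.append_left] using h1 i
      · simpa only [Fin.append_right] using h2 i
  rw [hpre, Measure.prod_prod, Measure.pi_pi, Measure.pi_pi]
  exact (Fin.prod_univ_add fun i => ν (s i)).symm

lemma measBgtAux (k n : ℕ) : MeasurableSet
    {x : Fin n → E →L[ℝ] E | k < Module.finrank ℝ (LinearMap.range (fprodAux x : E →ₗ[ℝ] E))} :=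
  (continuous_fprodAux n).measurable (measurableSet_rank_gtAux k)

lemma hsubAux (ν : Measure (E →L[ℝ] E)) [IsProbabilityMeasure ν] (r a b : ℕ) :
    Measure.pi (fun _ : Fin (a+b) => ν)
      {x | r < Module.finrank ℝ (LinearMap.range (fprodAux x : E →ₗ[ℝ] E))}
    ≤ Measure.pi (fun _ : Fin a => ν)
        {x | r < Module.finrank ℝ (LinearMap.range (fprodAux x : E →ₗ[ℝ] E))}
      * Measure.pi (fun _ : Fin b => ν)
        {x | r < Module.finrank ℝ (LinearMap.range (fprodAux x : E →ₗ[ℝ] E))} := by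
  rw [← map_appendAux ν a b,
    Measure.map_apply (measurable_appendAux a b) (measBgtAux r (a+b))]
  refine le_trans (measure_mono ?_) (le_of_eq (Measure.prod_prod
    (μ := Measure.pi (fun _ : Fin a => ν)) (ν := Measure.pi (fun _ : Fin b => ν))
    {x | r < Module.finrank ℝ (LinearMap.range (fprodAux x : E →ₗ[ℝ] E))}
    {x | r < Module.finrank ℝ (LinearMap.range (fprodAux x : E →ₗ[ℝ] E))}))
  intro p hp
  simp only [Set.mem_preimage, Set.mem_setOf_eq] at hp
  rw [fprodAux_append] at hp
  exact Set.mem_prod.mpr ⟨lt_of_lt_of_le hp (rank_mul_le_leftAux _ _),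
    lt_of_lt_of_le hp (rank_mul_le_rightAux _ _)⟩

end RankStabilizationAux

set_option maxHeartbeats 2000000 in
/-- the rank of the random walk stabilizes, with exponential speed. -/
theorem statement_7
    {E : Type*} [NormedAddCommGroup E] [InnerProductSpace ℝ E] [FiniteDimensional ℝ E]
    (hdim : 2 ≤ Module.finrank ℝ E)
    [MeasurableSpace (E →L[ℝ] E)] [BorelSpace (E →L[ℝ] E)]
    (ν : Measure (E →L[ℝ] E)) [IsProbabilityMeasure ν]
    (μ : Measure (ℕ → E →L[ℝ] E)) (hμ : IsIIDOf μ ν) :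
    ∃ r : ℕ, ∃ C : ℝ, 0 < C ∧ ∃ β : ℝ, 0 < β ∧
      (∀ n : ℕ,
        μ {ω | Module.finrank ℝ (LinearMap.range (wprod n ω : E →ₗ[ℝ] E)) < r} = 0 ∧
        μ {ω | r < Module.finrank ℝ (LinearMap.range (wprod n ω : E →ₗ[ℝ] E))}
          ≤ ENNReal.ofReal (C * Real.exp (-β * n))) ∧
      ∀ᵐ ω ∂μ, ∀ᶠ n in Filter.atTop,
        Module.finrank ℝ (LinearMap.range (wprod n ω : E →ₗ[ℝ] E)) = r := by
  classical
  set d := Module.finrank ℝ E with hd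
  -- the product measures on finite windows
  have hμmap : ∀ n : ℕ, μ.map (fun ω (i : Fin n) => ω (i : ℕ))
      = Measure.pi (fun _ : Fin n => ν) := fun n => map_restrAux ν μ hμ n
  -- measurability of rank sets for tuples
  have hBgt_meas : ∀ k n : ℕ, MeasurableSet
      {x : Fin n → E →L[ℝ] E | k < Module.finrank ℝ (LinearMap.range (fprodAux x : E →ₗ[ℝ] E))} :=
    fun k n => (continuous_fprodAux n).measurable (measurableSet_rank_gtAux k)
  have hBle_meas : ∀ k n : ℕ, MeasurableSet
      {x : Fin n → E →L[ℝ] E | Module.finrank ℝ (LinearMap.range (fprodAux x : E →ₗ[ℝ] E)) ≤ k} := by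
    intro k n
    have h := (hBgt_meas k n).compl
    convert h using 1
    ext x; simp [not_lt]
  -- existence of the minimal rank r
  have hPd : ∃ k : ℕ, ∃ n : ℕ,
      Measure.pi (fun _ : Fin n => ν)
        {x | Module.finrank ℝ (LinearMap.range (fprodAux x : E →ₗ[ℝ] E)) ≤ k} ≠ 0 := by
    refine ⟨d, 0, ?_⟩
    have huniv : {x : Fin 0 → E →L[ℝ] E |
        Module.finrank ℝ (LinearMap.range (fprodAux x : E →ₗ[ℝ] E)) ≤ d} = Set.univ :=
      Set.eq_univ_of_forall fun x => Submodule.finrank_le _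
    rw [huniv]
    simp
  set r := Nat.find hPd with hrdef
  obtain ⟨n₀, hq⟩ : ∃ n, Measure.pi (fun _ : Fin n => ν)
      {x | Module.finrank ℝ (LinearMap.range (fprodAux x : E →ₗ[ℝ] E)) ≤ r} ≠ 0 := Nat.find_spec hPd
  have hrmin : ∀ k, k < r → ∀ n, Measure.pi (fun _ : Fin n => ν)
      {x | Module.finrank ℝ (LinearMap.range (fprodAux x : E →ₗ[ℝ] E)) ≤ k} = 0 := by
    intro k hk n
    by_contra h
    exact Nat.find_min hPd hk ⟨n, h⟩
  have hrd : r ≤ d := by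
    apply Nat.find_le
    refine ⟨0, ?_⟩
    have huniv : {x : Fin 0 → E →L[ℝ] E |
        Module.finrank ℝ (LinearMap.range (fprodAux x : E →ₗ[ℝ] E)) ≤ d} = Set.univ :=
      Set.eq_univ_of_forall fun x => Submodule.finrank_le _
    rw [huniv]
    simp
  -- transfer between μ-events and product-measure events
  have htransfer_gt : ∀ n : ℕ, μ {ω | r < Module.finrank ℝ (LinearMap.range (wprod n ω : E →ₗ[ℝ] E))}
      = Measure.pi (fun _ : Fin n => ν)
          {x | r < Module.finrank ℝ (LinearMap.range (fprodAux x : E →ₗ[ℝ] E))} := by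
    intro n
    rw [← hμmap n, Measure.map_apply (measurable_restrAux n) (hBgt_meas r n)]
    congr 1
    ext ω
    simp only [Set.mem_preimage, Set.mem_setOf_eq]
    rw [wprod_eq_fprodAux n ω]
  have htransfer_le : ∀ k n : ℕ,
      μ {ω | Module.finrank ℝ (LinearMap.range (wprod n ω : E →ₗ[ℝ] E)) ≤ k}
      = Measure.pi (fun _ : Fin n => ν)
          {x | Module.finrank ℝ (LinearMap.range (fprodAux x : E →ₗ[ℝ] E)) ≤ k} := by
    intro k n
    rw [← hμmap n, Measure.map_apply (measurable_restrAux n) (hBle_meas k n)]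
    congr 1
    ext ω
    simp only [Set.mem_preimage, Set.mem_setOf_eq]
    rw [wprod_eq_fprodAux n ω]
  -- first half of the bullets: the rank is never < r
  have hlt0 : ∀ n : ℕ, μ {ω | Module.finrank ℝ (LinearMap.range (wprod n ω : E →ₗ[ℝ] E)) < r} = 0 := by
    intro n
    rcases Nat.eq_zero_or_pos r with h0 | hpos
    · have hempty : {ω : ℕ → E →L[ℝ] E |
          Module.finrank ℝ (LinearMap.range (wprod n ω : E →ₗ[ℝ] E)) < r} = ∅ := by
        ext ω; simp [h0]
      rw [hempty]; simp
    · have heq : {ω : ℕ → E →L[ℝ] E |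
          Module.finrank ℝ (LinearMap.range (wprod n ω : E →ₗ[ℝ] E)) < r}
          = {ω | Module.finrank ℝ (LinearMap.range (wprod n ω : E →ₗ[ℝ] E)) ≤ r - 1} := by
        ext ω; simp only [Set.mem_setOf_eq]; omega
      rw [heq, htransfer_le, hrmin (r - 1) (by omega) n]
  have hae_lt : ∀ᵐ ω ∂μ, ∀ n : ℕ,
      ¬ (Module.finrank ℝ (LinearMap.range (wprod n ω : E →ₗ[ℝ] E)) < r) := by
    rw [MeasureTheory.ae_all_iff]
    intro n
    rw [MeasureTheory.ae_iff]
    simp only [not_not]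
    exact hlt0 n
  by_cases hrlt : r < d
  · -- main case: r < d, blocks of length n₀ give exponential decay
    have hn₀ : 0 < n₀ := by
      rcases Nat.eq_zero_or_pos n₀ with h0 | h
      · exfalso
        apply hq
        subst h0
        have hempty : {x : Fin 0 → E →L[ℝ] E |
            Module.finrank ℝ (LinearMap.range (fprodAux x : E →ₗ[ℝ] E)) ≤ r} = ∅ := by
          ext x
          simp only [Set.mem_setOf_eq, Set.mem_empty_iff_false, iff_false, not_le]
          have hx : fprodAux x = 1 := by
            simp [fprodAux]
          rw [hx, rank_oneAux]
          exact hrlt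
        rw [hempty]
        simp
      · exact h
    set f : ℕ → ℝ≥0∞ := fun n => Measure.pi (fun _ : Fin n => ν)
        {x | r < Module.finrank ℝ (LinearMap.range (fprodAux x : E →ₗ[ℝ] E))} with hfdef
    have hf_le_one : ∀ n, f n ≤ 1 := fun n => prob_le_one
    set t := f n₀ with htdef
    have ht1 : t < 1 := by
      have hcompl : {x : Fin n₀ → E →L[ℝ] E |
            r < Module.finrank ℝ (LinearMap.range (fprodAux x : E →ₗ[ℝ] E))}
          = {x : Fin n₀ → E →L[ℝ] E |
            Module.finrank ℝ (LinearMap.range (fprodAux x : E →ₗ[ℝ] E)) ≤ r}ᶜ := by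
        ext x; simp [not_le]
      have heq : t = 1 - Measure.pi (fun _ : Fin n₀ => ν)
          {x | Module.finrank ℝ (LinearMap.range (fprodAux x : E →ₗ[ℝ] E)) ≤ r} := by
        rw [htdef, hfdef]
        simp only
        rw [hcompl, prob_compl_eq_one_sub (hBle_meas r n₀)]
      rw [heq]
      exact ENNReal.sub_lt_self ENNReal.one_ne_top one_ne_zero hq
    -- submultiplicativity
    have hsub : ∀ a b : ℕ, f (a + b) ≤ f a * f b := fun a b => hsubAux ν r a b
    -- iterating the submultiplicativity
    have hpow : ∀ m s : ℕ, f (n₀ * m + s) ≤ t ^ m * f s := by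
      intro m
      induction m with
      | zero =>
        intro s
        rw [Nat.mul_zero, Nat.zero_add, pow_zero, one_mul]
      | succ m ih =>
        intro s
        have harg : n₀ * (m + 1) + s = n₀ + (n₀ * m + s) := by ring
        rw [harg]
        calc f (n₀ + (n₀ * m + s)) ≤ f n₀ * f (n₀ * m + s) := hsub _ _
          _ ≤ t * (t ^ m * f s) := mul_le_mul' le_rfl (ih s)
          _ = t ^ (m + 1) * f s := by ring
    have hfn : ∀ n : ℕ, f n ≤ t ^ (n / n₀) := by
      intro n
      have harg : n₀ * (n / n₀) + n % n₀ = n := Nat.div_add_mod n n₀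
      calc f n = f (n₀ * (n / n₀) + n % n₀) := by rw [harg]
        _ ≤ t ^ (n / n₀) * f (n % n₀) := hpow _ _
        _ ≤ t ^ (n / n₀) * 1 := mul_le_mul' le_rfl (hf_le_one _)
        _ = t ^ (n / n₀) := mul_one _
    -- real constants
    have htne : t ≠ ⊤ := (ht1.trans_le le_top).ne
    set θ : ℝ := max t.toReal (1/2) with hθdef
    have hθpos : 0 < θ := lt_of_lt_of_le (by norm_num) (le_max_right _ _)
    have hθlt1 : θ < 1 := by
      refine max_lt ?_ (by norm_num)
      have h := (ENNReal.toReal_lt_toReal htne ENNReal.one_ne_top).mpr ht1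
      simpa using h
    have htθ : t ≤ ENNReal.ofReal θ := by
      rw [← ENNReal.ofReal_toReal htne]
      exact ENNReal.ofReal_le_ofReal (le_max_left _ _)
    have hlogneg : Real.log θ < 0 := Real.log_neg hθpos hθlt1
    have hn₀R : (0 : ℝ) < (n₀ : ℝ) := by exact_mod_cast hn₀
    set C : ℝ := θ⁻¹ with hCdef
    have hCpos : 0 < C := inv_pos.mpr hθpos
    set β : ℝ := -Real.log θ / (n₀ : ℝ) with hβdef
    have hβpos : 0 < β := div_pos (neg_pos.mpr hlogneg) hn₀R
    have hreal : ∀ n : ℕ, θ ^ (n / n₀) ≤ C * Real.exp (-β * n) := by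
      intro n
      set k := n / n₀ with hkdef
      have hkn : (n : ℝ) < (n₀ : ℝ) * k + n₀ := by
        have h2 : n % n₀ < n₀ := Nat.mod_lt n hn₀
        have h3 : n < n₀ * k + n₀ := by
          calc n = n₀ * k + n % n₀ := by rw [hkdef]; exact (Nat.div_add_mod n n₀).symm
            _ < n₀ * k + n₀ := Nat.add_lt_add_left h2 _
        exact_mod_cast h3
      have hexp : θ ^ k = Real.exp ((k : ℝ) * Real.log θ) := by
        rw [Real.exp_nat_mul, Real.exp_log hθpos]
      have hge : (n : ℝ) / (n₀ : ℝ) - 1 ≤ (k : ℝ) := by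
        rw [sub_le_iff_le_add, div_le_iff₀ hn₀R]
        nlinarith [hkn]
      have hle : θ ^ k ≤ Real.exp (((n : ℝ) / (n₀ : ℝ) - 1) * Real.log θ) := by
        rw [hexp]
        exact Real.exp_le_exp.mpr (mul_le_mul_of_nonpos_right hge hlogneg.le)
      refine le_trans hle (le_of_eq ?_)
      rw [hCdef, hβdef]
      rw [show θ⁻¹ = Real.exp (-Real.log θ) by rw [Real.exp_neg, Real.exp_log hθpos],
        ← Real.exp_add]
      congr 1
      field_simp
      ring
    -- the exponential bound
    have hbound : ∀ n : ℕ, μ {ω | r < Module.finrank ℝ (LinearMap.range (wprod n ω : E →ₗ[ℝ] E))}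
        ≤ ENNReal.ofReal (C * Real.exp (-β * n)) := by
      intro n
      rw [htransfer_gt n]
      calc Measure.pi (fun _ : Fin n => ν)
            {x | r < Module.finrank ℝ (LinearMap.range (fprodAux x : E →ₗ[ℝ] E))} = f n := rfl
        _ ≤ t ^ (n / n₀) := hfn n
        _ ≤ (ENNReal.ofReal θ) ^ (n / n₀) := pow_le_pow_left' htθ _
        _ = ENNReal.ofReal (θ ^ (n / n₀)) := (ENNReal.ofReal_pow hθpos.le _).symm
        _ ≤ ENNReal.ofReal (C * Real.exp (-β * n)) := ENNReal.ofReal_le_ofReal (hreal n)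
    -- Borel–Cantelli
    have hgeom : (∑' n : ℕ, ENNReal.ofReal (C * Real.exp (-β * n))) ≠ ⊤ := by
      have heq : ∀ n : ℕ, ENNReal.ofReal (C * Real.exp (-β * n))
          = ENNReal.ofReal C * (ENNReal.ofReal (Real.exp (-β))) ^ n := by
        intro n
        rw [show -β * (n : ℝ) = (n : ℝ) * (-β) by ring, Real.exp_nat_mul,
          ENNReal.ofReal_mul hCpos.le, ENNReal.ofReal_pow (Real.exp_pos _).le]
      rw [tsum_congr heq, ENNReal.tsum_mul_left, ENNReal.tsum_geometric]
      refine ENNReal.mul_ne_top ENNReal.ofReal_ne_top ?_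
      refine ENNReal.inv_ne_top.mpr ?_
      intro h0
      have hx1 : ENNReal.ofReal (Real.exp (-β)) < 1 :=
        ENNReal.ofReal_lt_one.mpr (Real.exp_lt_one_iff.mpr (by linarith))
      exact absurd (tsub_eq_zero_iff_le.mp h0) (not_le.mpr hx1)
    have hsum : (∑' n : ℕ, μ {ω | r < Module.finrank ℝ
        (LinearMap.range (wprod n ω : E →ₗ[ℝ] E))}) ≠ ⊤ :=
      ne_top_of_le_ne_top hgeom (ENNReal.tsum_le_tsum hbound)
    have hbc : ∀ᵐ ω ∂μ, ∀ᶠ n in Filter.atTop,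
        ω ∉ {ω' | r < Module.finrank ℝ (LinearMap.range (wprod n ω' : E →ₗ[ℝ] E))} :=
      MeasureTheory.ae_eventually_notMem hsum
    refine ⟨r, C, hCpos, β, hβpos, fun n => ⟨hlt0 n, hbound n⟩, ?_⟩
    filter_upwards [hbc, hae_lt] with ω h1 h2
    refine h1.mono fun n hn => ?_
    have h3 := h2 n
    change ¬ (r < Module.finrank ℝ (LinearMap.range (wprod n ω : E →ₗ[ℝ] E))) at hn
    omega
  · -- degenerate case: r = d, the rank can never exceed r
    have hreq : ∀ (n : ℕ) (ω : ℕ → E →L[ℝ] E),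
        Module.finrank ℝ (LinearMap.range (wprod n ω : E →ₗ[ℝ] E)) ≤ r := by
      intro n ω
      have h1 : Module.finrank ℝ (LinearMap.range (wprod n ω : E →ₗ[ℝ] E)) ≤ d := Submodule.finrank_le _
      omega
    have hgt0 : ∀ n : ℕ,
        μ {ω | r < Module.finrank ℝ (LinearMap.range (wprod n ω : E →ₗ[ℝ] E))} = 0 := by
      intro n
      have hempty : {ω : ℕ → E →L[ℝ] E |
          r < Module.finrank ℝ (LinearMap.range (wprod n ω : E →ₗ[ℝ] E))} = ∅ := by
        ext ω
        simp only [Set.mem_setOf_eq, Set.mem_empty_iff_false, iff_false, not_lt]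
        exact hreq n ω
      rw [hempty]; simp
    refine ⟨r, 1, one_pos, 1, one_pos, fun n => ⟨hlt0 n, ?_⟩, ?_⟩
    · rw [hgt0 n]; exact zero_le
    · filter_upwards [hae_lt] with ω hω
      exact Filter.Eventually.of_forall fun n => by
        have h1 := hreq n ω
        have h2 := hω n
        omega
end

section
/- Let ν be any Borel probability measure on End(E). Then: (i) there exists α < 1 such that for every v ∈ E, the quantity sup_{n ∈ ℕ} ℙ(γ̄_n v = 0) belongs to [0, α] ∪ {1}; (ii) the set K := { v ∈ E : sup_{n ∈ ℕ} ℙ(γ̄_n v = 0) = 1 } is a linear subspace of E, and ν{ g ∈ End(E) : g(K) ⊆ K } = 1. -/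
open MeasureTheory Filter Topology
open scoped ENNReal NNReal

attribute [local instance] Classical.propDecidable

set_option linter.unusedSectionVars false
section St8
variable {E : Type*} [NormedAddCommGroup E] [InnerProductSpace ℝ E] [FiniteDimensional ℝ E]

/-- reversed product `ω (n-1) * ⋯ * ω 0`. -/
noncomputable def st8rP (n : ℕ) (ω : ℕ → E →L[ℝ] E) : E →L[ℝ] E :=
  (((List.range n).map ω).reverse).prod

lemma st8rP_zero (ω : ℕ → E →L[ℝ] E) : st8rP 0 ω = 1 := rfl

lemma st8rP_succ (n : ℕ) (ω : ℕ → E →L[ℝ] E) : st8rP (n+1) ω = ω n * st8rP n ω := by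
  simp [st8rP, List.range_succ]

/-- reversed product of a tuple. -/
noncomputable def st8rF {n : ℕ} (x : Fin n → E →L[ℝ] E) : E →L[ℝ] E :=
  ((List.ofFn x).reverse).prod

/-- forward product of a tuple. -/
noncomputable def st8wF {n : ℕ} (x : Fin n → E →L[ℝ] E) : E →L[ℝ] E :=
  (List.ofFn x).prod

lemma st8_ofFn_rev {α : Type*} : ∀ {n : ℕ} (x : Fin n → α),
    List.ofFn (fun i => x i.rev) = (List.ofFn x).reverse := by
  intro n
  induction n with
  | zero => intro x; simp
  | succ n ih =>
    intro x
    rw [List.ofFn_succ, List.ofFn_succ' x]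
    simp only [Fin.rev_zero, Fin.rev_succ]
    rw [ih (fun i => x i.castSucc)]
    simp [List.concat_eq_append]

lemma st8rF_eq_wF_rev {n : ℕ} (x : Fin n → E →L[ℝ] E) :
    st8rF x = st8wF (fun i => x i.rev) := by
  rw [st8wF, st8_ofFn_rev, st8rF]

lemma st8_range_map (n : ℕ) (ω : ℕ → E →L[ℝ] E) :
    (List.range n).map ω = List.ofFn (fun i : Fin n => ω i) := by
  rw [List.ofFn_eq_map]
  apply List.ext_getElem <;> simp

lemma st8wF_cons {n : ℕ} (g : E →L[ℝ] E) (y : Fin n → E →L[ℝ] E) :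
    st8rF (Fin.cons g y) = st8rF y * g := by
  rw [st8rF, List.ofFn_succ]
  simp [st8rF, List.concat_eq_append]

end St8

section St8b
open MeasureTheory Filter Topology
open scoped ENNReal NNReal
variable {E : Type*} [NormedAddCommGroup E] [InnerProductSpace ℝ E] [FiniteDimensional ℝ E]

lemma st8rP_continuous (n : ℕ) : Continuous (fun ω : ℕ → E →L[ℝ] E => st8rP n ω) := by
  induction n with
  | zero => simpa [st8rP_zero] using continuous_const
  | succ n ih =>
    simp only [st8rP_succ]
    exact (continuous_apply n).mul ih

lemma st8rF_continuous (n : ℕ) : Continuous (fun x : Fin n → E →L[ℝ] E => st8rF x) := by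
  induction n with
  | zero => simpa [st8rF] using continuous_const
  | succ n ih =>
    have h : ∀ x : Fin (n+1) → E →L[ℝ] E, st8rF x = st8rF (Fin.tail x) * x 0 := by
      intro x
      have := st8wF_cons (x 0) (Fin.tail x)
      rwa [Fin.cons_self_tail] at this
    simp only [h]
    have htail : Continuous (fun x : Fin (n+1) → E →L[ℝ] E => Fin.tail x) :=
      continuous_pi (fun i => continuous_apply i.succ)
    exact (ih.comp htail).mul (continuous_apply 0)

variable [MeasurableSpace (E →L[ℝ] E)] [BorelSpace (E →L[ℝ] E)]

lemma st8_measClosed {X : Type*} [TopologicalSpace X] [MeasurableSpace X] [OpensMeasurableSpace X]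
    {f : X → E} (hf : Continuous f) : MeasurableSet {x | f x = 0} := by
  have : {x | f x = 0} = f ⁻¹' {0} := rfl
  rw [this]
  exact (isClosed_singleton.preimage hf).measurableSet

lemma st8_measSet_rP (n : ℕ) (v : E) :
    MeasurableSet {ω : ℕ → E →L[ℝ] E | st8rP n ω v = 0} :=
  st8_measClosed (((ContinuousLinearMap.apply ℝ E v).continuous).comp (st8rP_continuous n))

lemma st8_measSet_rF (n : ℕ) (v : E) :
    MeasurableSet {x : Fin n → E →L[ℝ] E | st8rF x v = 0} :=
  st8_measClosed (((ContinuousLinearMap.apply ℝ E v).continuous).comp (st8rF_continuous n))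

variable {ν : Measure (E →L[ℝ] E)} [IsProbabilityMeasure ν]
variable {μ : Measure (ℕ → E →L[ℝ] E)}

lemma st8_isProb (hμ : IsIIDOf μ ν) : IsProbabilityMeasure μ := by
  constructor
  have := hμ 0 (fun _ => Set.univ) (fun i => MeasurableSet.univ)
  simpa using this

lemma st8_law (hμ : IsIIDOf μ ν) (n : ℕ) :
    Measure.pi (fun _ : Fin n => ν) = μ.map (fun ω (i : Fin n) => ω (i : ℕ)) := by
  have hT : Measurable (fun ω : ℕ → E →L[ℝ] E => fun i : Fin n => ω i) :=
    measurable_pi_lambda _ (fun i => measurable_pi_apply _)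
  refine Measure.pi_eq (fun s hs => ?_)
  rw [Measure.map_apply hT (MeasurableSet.univ_pi hs)]
  have : (fun ω : ℕ → E →L[ℝ] E => fun i : Fin n => ω i) ⁻¹' (Set.univ.pi s)
      = {ω | ∀ i : Fin n, ω i ∈ s i} := by
    ext ω; simp [Set.mem_pi]
  rw [this, hμ n s hs]

lemma st8_pi_rev (n : ℕ) :
    (Measure.pi (fun _ : Fin n => ν)) =
      (Measure.pi (fun _ : Fin n => ν)).map (fun x (i : Fin n) => x i.rev) := by
  have hR : Measurable (fun x : Fin n → E →L[ℝ] E => fun i : Fin n => x i.rev) :=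
    measurable_pi_lambda _ (fun i => measurable_pi_apply _)
  refine Measure.pi_eq (fun s hs => ?_)
  rw [Measure.map_apply hR (MeasurableSet.univ_pi hs)]
  have : (fun x : Fin n → E →L[ℝ] E => fun i : Fin n => x i.rev) ⁻¹' (Set.univ.pi s)
      = Set.univ.pi (fun i => s i.rev) := by
    ext x
    simp only [Set.mem_preimage, Set.mem_pi, Set.mem_univ, forall_true_left, true_implies]
    constructor
    · intro h j; simpa using h j.rev
    · intro h i; simpa using h i.rev
  rw [this, Measure.pi_pi]
  exact Equiv.prod_comp Fin.revPerm (fun j => ν (s j))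

end St8b

section St8c
open MeasureTheory Filter Topology
open scoped ENNReal NNReal
variable {E : Type*} [NormedAddCommGroup E] [InnerProductSpace ℝ E] [FiniteDimensional ℝ E]

lemma st8rP_eq_rF (n : ℕ) (ω : ℕ → E →L[ℝ] E) :
    st8rP n ω = st8rF (fun i : Fin n => ω (i : ℕ)) := by
  rw [st8rP, st8_range_map, st8rF]

lemma st8wprod_eq_wF (n : ℕ) (ω : ℕ → E →L[ℝ] E) :
    wprod n ω = st8wF (fun i : Fin n => ω (i : ℕ)) := by
  rw [wprod, st8_range_map, st8wF]

lemma st8rF_tail {n : ℕ} (x : Fin (n+1) → E →L[ℝ] E) :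
    st8rF x = st8rF (Fin.tail x) * x 0 := by
  have := st8wF_cons (x 0) (Fin.tail x)
  rwa [Fin.cons_self_tail] at this

lemma st8wF_continuous (n : ℕ) : Continuous (fun x : Fin n → E →L[ℝ] E => st8wF x) := by
  have : (fun x : Fin n → E →L[ℝ] E => st8wF x)
      = (fun x => st8rF (fun i : Fin n => x i.rev)) := by
    funext x
    rw [st8rF_eq_wF_rev]
    congr 1
    funext i
    rw [Fin.rev_rev]
  rw [this]
  exact (st8rF_continuous n).comp (continuous_pi (fun i => continuous_apply _))

variable [MeasurableSpace (E →L[ℝ] E)] [BorelSpace (E →L[ℝ] E)]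
variable {ν : Measure (E →L[ℝ] E)} [IsProbabilityMeasure ν]
variable {μ : Measure (ℕ → E →L[ℝ] E)}

lemma st8_meas_T (n : ℕ) : Measurable (fun ω : ℕ → E →L[ℝ] E => fun i : Fin n => ω (i : ℕ)) :=
  measurable_pi_lambda _ (fun i => measurable_pi_apply _)

lemma st8_measSet_wF (n : ℕ) (v : E) :
    MeasurableSet {x : Fin n → E →L[ℝ] E | st8wF x v = 0} :=
  st8_measClosed (((ContinuousLinearMap.apply ℝ E v).continuous).comp (st8wF_continuous n))

lemma st8_mu_wprod (hμ : IsIIDOf μ ν) (n : ℕ) (v : E) :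
    μ {ω | wprod n ω v = 0} = Measure.pi (fun _ : Fin n => ν) {x | st8wF x v = 0} := by
  rw [st8_law hμ n, Measure.map_apply (st8_meas_T n) (st8_measSet_wF n v)]
  congr 1
  ext ω
  simp only [Set.mem_preimage, Set.mem_setOf_eq, st8wprod_eq_wF]

lemma st8_mu_rP (hμ : IsIIDOf μ ν) (n : ℕ) (v : E) :
    μ {ω | st8rP n ω v = 0} = Measure.pi (fun _ : Fin n => ν) {x | st8rF x v = 0} := by
  rw [st8_law hμ n, Measure.map_apply (st8_meas_T n) (st8_measSet_rF n v)]
  congr 1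
  ext ω
  simp only [Set.mem_preimage, Set.mem_setOf_eq, st8rP_eq_rF]

/-- reversal: the two hitting probabilities agree. -/
lemma st8_mu_wprod_eq_rP (hμ : IsIIDOf μ ν) (n : ℕ) (v : E) :
    μ {ω | wprod n ω v = 0} = μ {ω | st8rP n ω v = 0} := by
  rw [st8_mu_wprod hμ n v, st8_mu_rP hμ n v]
  have hR : Measurable (fun x : Fin n → E →L[ℝ] E => fun i : Fin n => x i.rev) :=
    measurable_pi_lambda _ (fun i => measurable_pi_apply _)
  conv_lhs => rw [st8_pi_rev (ν := ν) n]
  rw [Measure.map_apply hR (st8_measSet_wF n v)]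
  congr 1
  ext x
  simp only [Set.mem_preimage, Set.mem_setOf_eq]
  rw [st8rF_eq_wF_rev]

/-- the Fubini step. -/
lemma st8_mu_rP_succ (hμ : IsIIDOf μ ν) (n : ℕ) (v : E) :
    μ {ω | st8rP (n+1) ω v = 0}
      = ∫⁻ g, μ {ω | st8rP n ω (g v) = 0} ∂ν := by
  have e := MeasurableEquiv.piFinSuccAbove (fun _ : Fin (n+1) => (E →L[ℝ] E)) 0
  have hmp := measurePreserving_piFinSuccAbove (fun _ : Fin (n+1) => ν) 0
  have hBmeas : MeasurableSet {p : (E →L[ℝ] E) × (Fin n → E →L[ℝ] E) | st8rF p.2 (p.1 v) = 0} := by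
    refine st8_measClosed ?_
    have h1 : Continuous (fun p : (E →L[ℝ] E) × (Fin n → E →L[ℝ] E) => st8rF p.2) :=
      (st8rF_continuous n).comp continuous_snd
    have h2 : Continuous (fun p : (E →L[ℝ] E) × (Fin n → E →L[ℝ] E) => p.1 v) :=
      ((ContinuousLinearMap.apply ℝ E v).continuous).comp continuous_fst
    have h3 : Continuous (fun p : (E →L[ℝ] E) × E => p.1 p.2) := by continuity
    exact h3.comp (h1.prodMk h2)
  rw [st8_mu_rP hμ (n+1) v]
  have hpre : {x : Fin (n+1) → E →L[ℝ] E | st8rF x v = 0}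
      = (MeasurableEquiv.piFinSuccAbove (fun _ : Fin (n+1) => (E →L[ℝ] E)) 0) ⁻¹'
        {p : (E →L[ℝ] E) × (Fin n → E →L[ℝ] E) | st8rF p.2 (p.1 v) = 0} := by
    ext x
    simp only [Set.mem_preimage, Set.mem_setOf_eq, MeasurableEquiv.piFinSuccAbove_apply]
    rw [st8rF_tail x]
    exact Iff.rfl
  rw [hpre, MeasureTheory.MeasurePreserving.measure_preimage hmp hBmeas.nullMeasurableSet]
  rw [Measure.prod_apply hBmeas]
  refine MeasureTheory.lintegral_congr (fun g => ?_)
  rw [st8_mu_rP hμ n (g v)]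
  congr 1

end St8c

section St8d
open MeasureTheory Filter Topology
open scoped ENNReal NNReal
variable {E : Type*} [NormedAddCommGroup E] [InnerProductSpace ℝ E] [FiniteDimensional ℝ E]

lemma st8rP_mono {m n : ℕ} (hmn : m ≤ n) (ω : ℕ → E →L[ℝ] E) {v : E}
    (h : st8rP m ω v = 0) : st8rP n ω v = 0 := by
  induction n, hmn using Nat.le_induction with
  | base => exact h
  | succ n hmn ih =>
    rw [st8rP_succ]
    simp only [ContinuousLinearMap.mul_apply, ih, map_zero]

/-- The random subspace `L(ω) = ⋃ n ker (ω (n-1) ⋯ ω 0)`. -/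
noncomputable def st8L (ω : ℕ → E →L[ℝ] E) : Submodule ℝ E where
  carrier := {v | ∃ n, st8rP n ω v = 0}
  zero_mem' := ⟨0, map_zero _⟩
  add_mem' := by
    rintro a b ⟨m, hm⟩ ⟨n, hn⟩
    refine ⟨max m n, ?_⟩
    rw [map_add, st8rP_mono (le_max_left m n) ω hm, st8rP_mono (le_max_right m n) ω hn, add_zero]
  smul_mem' := by
    rintro c a ⟨m, hm⟩
    exact ⟨m, by rw [_root_.map_smul, hm, smul_zero]⟩

lemma st8L_closed (ω : ℕ → E →L[ℝ] E) : IsClosed (st8L ω : Set E) :=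
  Submodule.closed_of_finiteDimensional _

lemma st8L_smul_mem_iff {ω : ℕ → E →L[ℝ] E} {c : ℝ} (hc : c ≠ 0) {v : E} :
    c • v ∈ st8L ω ↔ v ∈ st8L ω := by
  constructor
  · intro h
    have := (st8L ω).smul_mem c⁻¹ h
    rwa [smul_smul, inv_mul_cancel₀ hc, one_smul] at this
  · exact fun h => (st8L ω).smul_mem c h

variable [MeasurableSpace (E →L[ℝ] E)] [BorelSpace (E →L[ℝ] E)]
variable {ν : Measure (E →L[ℝ] E)} [IsProbabilityMeasure ν]
variable {μ : Measure (ℕ → E →L[ℝ] E)}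

lemma st8_S_eq (v : E) :
    {ω : ℕ → E →L[ℝ] E | v ∈ st8L ω} = ⋃ n, {ω | st8rP n ω v = 0} := by
  ext ω
  simp only [Set.mem_setOf_eq, Set.mem_iUnion]
  exact Iff.rfl

lemma st8_measSet_S (v : E) : MeasurableSet {ω : ℕ → E →L[ℝ] E | v ∈ st8L ω} := by
  rw [st8_S_eq]
  exact MeasurableSet.iUnion (fun n => st8_measSet_rP n v)

lemma st8_mu_S (v : E) :
    μ {ω : ℕ → E →L[ℝ] E | v ∈ st8L ω} = ⨆ n, μ {ω | st8rP n ω v = 0} := by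
  rw [st8_S_eq]
  refine Monotone.measure_iUnion (fun m n hmn => ?_)
  exact fun ω h => st8rP_mono hmn ω h

lemma st8_sup_wprod (hμ : IsIIDOf μ ν) (v : E) :
    (⨆ n, μ {ω | wprod n ω v = 0}) = μ {ω : ℕ → E →L[ℝ] E | v ∈ st8L ω} := by
  rw [st8_mu_S]
  exact iSup_congr (fun n => st8_mu_wprod_eq_rP hμ n v)

lemma st8_sandwich {X : Type*} [MeasurableSpace X] {μ : Measure X} [IsProbabilityMeasure μ]
    {A B C : Set X} (hA : MeasurableSet A) (hB : MeasurableSet B)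
    (h1 : μ A = 1) (h2 : μ B = 1) (hsub : A ∩ B ⊆ C) : μ C = 1 := by
  have hin : μ (A ∩ B) = 1 := by
    have hc : μ ((A ∩ B)ᶜ) = 0 := by
      rw [Set.compl_inter]
      refine le_antisymm (le_trans (measure_union_le _ _) ?_) zero_le
      rw [prob_compl_eq_zero_iff hA |>.mpr h1, prob_compl_eq_zero_iff hB |>.mpr h2, add_zero]
    have := measure_add_measure_compl (μ := μ) (hA.inter hB)
    rw [hc, add_zero, measure_univ] at this
    exact this
  exact le_antisymm prob_le_one (hin ▸ measure_mono hsub)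

/-- The subspace `K` of vectors killed with probability approaching one. -/
noncomputable def st8K (μ : Measure (ℕ → E →L[ℝ] E)) [IsProbabilityMeasure μ] : Submodule ℝ E where
  carrier := {v | μ {ω : ℕ → E →L[ℝ] E | v ∈ st8L ω} = 1}
  zero_mem' := by
    have : {ω : ℕ → E →L[ℝ] E | (0 : E) ∈ st8L ω} = Set.univ := by
      ext ω; simp [Submodule.zero_mem]
    simp only [Set.mem_setOf_eq, this, measure_univ]
  add_mem' := by
    rintro a b (ha : μ _ = 1) (hb : μ _ = 1)
    refine st8_sandwich (st8_measSet_S a) (st8_measSet_S b) ha hb ?_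
    rintro ω ⟨h1, h2⟩
    exact (st8L ω).add_mem h1 h2
  smul_mem' := by
    rintro c a (ha : μ _ = 1)
    rcases eq_or_ne c 0 with rfl | hc
    · have : {ω : ℕ → E →L[ℝ] E | (0:ℝ) • a ∈ st8L ω} = Set.univ := by
        ext ω; simp [Submodule.zero_mem]
      simp only [Set.mem_setOf_eq, this, measure_univ]
    · have : {ω : ℕ → E →L[ℝ] E | c • a ∈ st8L ω} = {ω | a ∈ st8L ω} := by
        ext ω; exact st8L_smul_mem_iff hc
      simpa only [Set.mem_setOf_eq, this] using ha

lemma st8K_mem_iff {μ : Measure (ℕ → E →L[ℝ] E)} [IsProbabilityMeasure μ] (v : E) :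
    v ∈ st8K μ ↔ μ {ω : ℕ → E →L[ℝ] E | v ∈ st8L ω} = 1 := Iff.rfl

end St8d

section St8e
open MeasureTheory Filter Topology
open scoped ENNReal NNReal
variable {E : Type*} [NormedAddCommGroup E] [InnerProductSpace ℝ E] [FiniteDimensional ℝ E]
variable [MeasurableSpace (E →L[ℝ] E)] [BorelSpace (E →L[ℝ] E)]
variable {ν : Measure (E →L[ℝ] E)} [IsProbabilityMeasure ν]
variable {μ : Measure (ℕ → E →L[ℝ] E)}

lemma st8_finite_inter_one {X : Type*} [MeasurableSpace X] {μ : Measure X}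
    [IsProbabilityMeasure μ] {ι : Type*} (t : Finset ι) (f : ι → Set X)
    (hmeas : ∀ i ∈ t, MeasurableSet (f i)) (h1 : ∀ i ∈ t, μ (f i) = 1) :
    μ (⋂ i ∈ t, f i) = 1 := by
  have hm : MeasurableSet (⋂ i ∈ t, f i) := MeasurableSet.biInter t.countable_toSet hmeas
  have hc : μ ((⋂ i ∈ t, f i)ᶜ) = 0 := by
    rw [Set.compl_iInter₂]
    refine le_antisymm (le_trans (measure_biUnion_finset_le t _) ?_) zero_le
    have : ∀ i ∈ t, μ ((f i)ᶜ) = 0 := fun i hi => (prob_compl_eq_zero_iff (hmeas i hi)).mpr (h1 i hi)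
    rw [Finset.sum_congr rfl this, Finset.sum_const_zero]
  have := measure_add_measure_compl (μ := μ) hm
  rw [hc, add_zero, measure_univ] at this
  exact this

lemma st8_compl_le {v : E} {j : ℕ} [IsProbabilityMeasure μ]
    (h : 1 - ((2:ℝ≥0∞))⁻¹^j < μ {ω : ℕ → E →L[ℝ] E | v ∈ st8L ω}) :
    μ ({ω : ℕ → E →L[ℝ] E | v ∈ st8L ω}ᶜ) ≤ (2:ℝ≥0∞)⁻¹^j := by
  rw [prob_compl_eq_one_sub (st8_measSet_S v)]
  rw [tsub_le_iff_right]
  calc (1:ℝ≥0∞) = (1 - (2:ℝ≥0∞)⁻¹^j) + (2:ℝ≥0∞)⁻¹^j := by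
        rw [tsub_add_cancel_of_le]
        exact pow_le_one' (by simp) j
    _ ≤ μ {ω : ℕ → E →L[ℝ] E | v ∈ st8L ω} + (2:ℝ≥0∞)⁻¹^j := by
        exact add_le_add_left h.le _
    _ = _ := by rw [add_comm]

/-- Part (i): the gap below 1. -/
lemma st8_gap (hμ : IsIIDOf μ ν) :
    ∃ α : ℝ, α < 1 ∧ ∀ v : E, μ {ω : ℕ → E →L[ℝ] E | v ∈ st8L ω} < 1 →
      μ {ω : ℕ → E →L[ℝ] E | v ∈ st8L ω} ≤ ENNReal.ofReal α := by
  haveI : IsProbabilityMeasure μ := st8_isProb hμ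
  set p : E → ℝ≥0∞ := fun v => μ {ω : ℕ → E →L[ℝ] E | v ∈ st8L ω} with hp
  set A : Set ℝ≥0∞ := {x | ∃ v : E, p v = x ∧ x < 1} with hA
  by_cases hq : sSup A < 1
  · refine ⟨(sSup A).toReal, ?_, fun v hv => ?_⟩
    · have h1 : (sSup A).toReal < (1:ℝ≥0∞).toReal :=
        ENNReal.toReal_strict_mono ENNReal.one_ne_top hq
      simpa using h1
    · have hmem : p v ∈ A := ⟨v, rfl, hv⟩
      have : p v ≤ sSup A := le_sSup hmem
      rwa [ENNReal.ofReal_toReal (ne_top_of_lt hq)]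
  · exfalso
    have hle : sSup A ≤ 1 := sSup_le (by rintro x ⟨v, hv, hlt⟩; exact hlt.le)
    have hsup : sSup A = 1 := le_antisymm hle (not_lt.mp hq)
    have hpick : ∀ j : ℕ, ∃ v : E, p v < 1 ∧ 1 - (2:ℝ≥0∞)⁻¹^j < p v := by
      intro j
      have hlt1 : 1 - (2:ℝ≥0∞)⁻¹^j < sSup A := by
        rw [hsup]
        refine ENNReal.sub_lt_self ENNReal.one_ne_top one_ne_zero ?_
        exact pow_ne_zero j (ENNReal.inv_ne_zero.mpr ENNReal.ofNat_ne_top)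
      obtain ⟨x, hxA, hxlt⟩ := lt_sSup_iff.mp hlt1
      obtain ⟨v, rfl, hvlt⟩ := hxA
      exact ⟨v, hvlt, hxlt⟩
    choose v hvlt hvgt using hpick
    obtain ⟨sK, hsK⟩ := IsNoetherian.noetherian (st8K μ)
    have hsKmem : ∀ x ∈ sK, (x : E) ∈ st8K μ := fun x hx => hsK ▸ Submodule.subset_span hx
    set GK := ⋂ x ∈ sK, {ω : ℕ → E →L[ℝ] E | x ∈ st8L ω} with hGKdef
    have hGK1 : μ GK = 1 :=
      st8_finite_inter_one sK _ (fun i _ => st8_measSet_S i) (fun i hi => hsKmem i hi)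
    have hGKc : μ (GKᶜ) = 0 :=
      (prob_compl_eq_zero_iff
        (MeasurableSet.biInter sK.countable_toSet (fun i _ => st8_measSet_S i))).mpr hGK1
    have hGKsub : ∀ ω, ω ∈ GK → st8K μ ≤ st8L ω := by
      intro ω hω
      rw [← hsK]
      refine Submodule.span_le.mpr (fun x hx => ?_)
      exact Set.mem_iInter₂.mp hω x hx
    set w : ℕ → E := fun j => v j - (Submodule.orthogonalProjectionOnto (st8K μ) (v j) : E) with hwdef
    have hworth : ∀ j, w j ∈ (st8K μ)ᗮ := fun j => Submodule.sub_starProjection_mem_orthogonal _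
    have hwgt : ∀ j, 1 - (2:ℝ≥0∞)⁻¹^j < p (w j) := by
      intro j
      refine lt_of_lt_of_le (hvgt j) ?_
      have hsub : {ω : ℕ → E →L[ℝ] E | v j ∈ st8L ω} ∩ GK ⊆ {ω | w j ∈ st8L ω} := by
        rintro ω ⟨h1, h2⟩
        exact (st8L ω).sub_mem h1 ((hGKsub ω h2) (Submodule.orthogonalProjectionOnto (st8K μ) (v j)).2)
      calc p (v j) = μ ({ω : ℕ → E →L[ℝ] E | v j ∈ st8L ω} ∩ GK) :=
            (measure_inter_conull hGKc).symm
        _ ≤ p (w j) := measure_mono hsub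
    have hwne : ∀ j, w j ∉ st8K μ := by
      intro j hmem
      have hw0 : w j = 0 :=
        Submodule.disjoint_def.mp (Submodule.orthogonal_disjoint (st8K μ)) _ hmem (hworth j)
      have hvK : v j ∈ st8K μ := by
        have : v j = (Submodule.orthogonalProjectionOnto (st8K μ) (v j) : E) := by
          have := sub_eq_zero.mp hw0
          exact this
        rw [this]
        exact (Submodule.orthogonalProjectionOnto (st8K μ) (v j)).2
      exact absurd ((st8K_mem_iff (v j)).mp hvK) (ne_of_lt (hvlt j))
    have hwnz : ∀ j, w j ≠ 0 := fun j h => hwne j (h ▸ (st8K μ).zero_mem)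
    set u : ℕ → E := fun j => ‖w j‖⁻¹ • w j with hudef
    have hunorm : ∀ j, ‖u j‖ = 1 := by
      intro j
      rw [hudef]
      simp only [norm_smul, norm_inv, norm_norm]
      exact inv_mul_cancel₀ (norm_ne_zero_iff.mpr (hwnz j))
    have huorth : ∀ j, u j ∈ (st8K μ)ᗮ := fun j => ((st8K μ)ᗮ).smul_mem _ (hworth j)
    have hup : ∀ j, p (u j) = p (w j) := by
      intro j
      have hset : {ω : ℕ → E →L[ℝ] E | u j ∈ st8L ω} = {ω | w j ∈ st8L ω} :=
        Set.ext (fun ω => st8L_smul_mem_iff (inv_ne_zero (norm_ne_zero_iff.mpr (hwnz j))))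
      show μ {ω : ℕ → E →L[ℝ] E | u j ∈ st8L ω} = μ {ω | w j ∈ st8L ω}
      rw [hset]
    have hugt : ∀ j, 1 - (2:ℝ≥0∞)⁻¹^j < p (u j) := fun j => (hup j).symm ▸ hwgt j
    obtain ⟨uF, huFs, φ, hφ, hconv⟩ :=
      (isCompact_sphere (0:E) 1).tendsto_subseq
        (fun j => (mem_sphere_zero_iff_norm).mpr (hunorm j))
    have hTsub : ∀ m : ℕ,
        (⋂ k : ℕ, {ω : ℕ → E →L[ℝ] E | u (φ (k + m)) ∈ st8L ω}) ⊆
          {ω : ℕ → E →L[ℝ] E | uF ∈ st8L ω} := by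
      intro m ω hω
      simp only [Set.mem_iInter, Set.mem_setOf_eq] at hω
      have htend : Tendsto (fun k => u (φ (k + m))) atTop (𝓝 uF) :=
        hconv.comp (tendsto_add_atTop_nat m)
      exact (st8L_closed ω).mem_of_tendsto htend (Filter.Eventually.of_forall hω)
    have hTc : ∀ m : ℕ, μ ({ω : ℕ → E →L[ℝ] E | uF ∈ st8L ω}ᶜ) ≤ (2:ℝ≥0∞)⁻¹^m * 2 := by
      intro m
      have h1 : {ω : ℕ → E →L[ℝ] E | uF ∈ st8L ω}ᶜ ⊆
          ⋃ k : ℕ, ({ω : ℕ → E →L[ℝ] E | u (φ (k + m)) ∈ st8L ω}ᶜ) := by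
        rw [← Set.compl_iInter]
        exact Set.compl_subset_compl.mpr (hTsub m)
      refine le_trans (measure_mono h1) (le_trans (measure_iUnion_le _) ?_)
      have h2 : ∀ k : ℕ, μ ({ω : ℕ → E →L[ℝ] E | u (φ (k + m)) ∈ st8L ω}ᶜ) ≤
          (2:ℝ≥0∞)⁻¹^(k + m) := by
        intro k
        refine le_trans (st8_compl_le (hugt (φ (k + m)))) ?_
        exact pow_le_pow_of_le_one zero_le (by norm_num : (2:ℝ≥0∞)⁻¹ ≤ 1) (hφ.le_apply)
      refine le_trans (ENNReal.tsum_le_tsum h2) ?_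
      have h3 : ∀ k : ℕ, (2:ℝ≥0∞)⁻¹^(k + m) = (2:ℝ≥0∞)⁻¹^k * (2:ℝ≥0∞)⁻¹^m := fun k => pow_add _ _ _
      rw [tsum_congr h3, ENNReal.tsum_mul_right, ENNReal.tsum_geometric]
      have h4 : (1:ℝ≥0∞) - 2⁻¹ = 2⁻¹ := ENNReal.one_sub_inv_two
      rw [h4, inv_inv, mul_comm]
    have hzero : μ ({ω : ℕ → E →L[ℝ] E | uF ∈ st8L ω}ᶜ) = 0 := by
      refine le_antisymm ?_ zero_le
      have htend0 : Tendsto (fun m : ℕ => (2:ℝ≥0∞)⁻¹^m * 2) atTop (𝓝 0) := by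
        have h := ENNReal.tendsto_pow_atTop_nhds_zero_of_lt_one
          (by norm_num : (2:ℝ≥0∞)⁻¹ < 1)
        have h' := ENNReal.Tendsto.mul_const h (Or.inr (ENNReal.ofNat_ne_top (n := 2)))
        simpa using h'
      exact ge_of_tendsto htend0 (Filter.Eventually.of_forall hTc)
    have huFK : uF ∈ st8K μ := (prob_compl_eq_zero_iff (st8_measSet_S uF)).mp hzero
    have huForth : uF ∈ (st8K μ)ᗮ := by
      refine (Submodule.isClosed_orthogonal (st8K μ)).mem_of_tendsto hconv
        (Filter.Eventually.of_forall (fun k => huorth (φ k)))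
    have huF0 : uF = 0 :=
      Submodule.disjoint_def.mp (Submodule.orthogonal_disjoint (st8K μ)) _ huFK huForth
    have : ‖uF‖ = 1 := mem_sphere_zero_iff_norm.mp huFs
    rw [huF0, norm_zero] at this
    exact zero_ne_one this

end St8e

section St8f
open MeasureTheory Filter Topology
open scoped ENNReal NNReal
variable {E : Type*} [NormedAddCommGroup E] [InnerProductSpace ℝ E] [FiniteDimensional ℝ E]
variable [MeasurableSpace (E →L[ℝ] E)] [BorelSpace (E →L[ℝ] E)]
variable {ν : Measure (E →L[ℝ] E)} [IsProbabilityMeasure ν]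
variable {μ : Measure (ℕ → E →L[ℝ] E)}

lemma st8_measSet_gvK [IsProbabilityMeasure μ] (v : E) :
    MeasurableSet {g : E →L[ℝ] E | g v ∈ st8K (E := E) μ} := by
  have hK : IsClosed ((st8K (E := E) μ : Submodule ℝ E) : Set E) :=
    Submodule.closed_of_finiteDimensional _
  have hcont : Continuous (fun g : E →L[ℝ] E => g v) :=
    (ContinuousLinearMap.apply ℝ E v).continuous
  exact (hK.preimage hcont).measurableSet

lemma st8_invariance (hμ : IsIIDOf μ ν) [IsProbabilityMeasure μ] {α : ℝ} (hα : α < 1)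
    (hgap : ∀ x : E, μ {ω : ℕ → E →L[ℝ] E | x ∈ st8L ω} < 1 →
      μ {ω : ℕ → E →L[ℝ] E | x ∈ st8L ω} ≤ ENNReal.ofReal α)
    {v : E} (hv : v ∈ st8K (E := E) μ) :
    ν {g : E →L[ℝ] E | g v ∈ st8K (E := E) μ} = 1 := by
  set B : Set (E →L[ℝ] E) := {g : E →L[ℝ] E | g v ∈ st8K (E := E) μ}ᶜ with hBdef
  have hBm : MeasurableSet B := (st8_measSet_gvK v).compl
  have hB0 : ν B = 0 := by
    by_contra hB
    rcases eq_or_ne v 0 with rfl | hvne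
    · have : B = ∅ := by
        ext g
        simp [hBdef, (st8K (E := E) μ).zero_mem]
      rw [this] at hB
      exact hB measure_empty
    -- main estimate
    have hbound : ∀ n : ℕ, μ {ω : ℕ → E →L[ℝ] E | st8rP (n+1) ω v = 0}
        ≤ ν Bᶜ + ENNReal.ofReal α * ν B := by
      intro n
      rw [st8_mu_rP_succ hμ n v]
      have hpt : ∀ g : E →L[ℝ] E, μ {ω : ℕ → E →L[ℝ] E | st8rP n ω (g v) = 0}
          ≤ Bᶜ.indicator (fun _ => (1:ℝ≥0∞)) g + B.indicator (fun _ => ENNReal.ofReal α) g := by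
        intro g
        by_cases hg : g ∈ B
        · have hgK : g v ∉ st8K (E := E) μ := hg
          have hlt : μ {ω : ℕ → E →L[ℝ] E | g v ∈ st8L ω} < 1 :=
            lt_of_le_of_ne prob_le_one (fun h => hgK ((st8K_mem_iff (g v)).mpr h))
          have hle1 : μ {ω : ℕ → E →L[ℝ] E | st8rP n ω (g v) = 0}
              ≤ μ {ω : ℕ → E →L[ℝ] E | g v ∈ st8L ω} :=
            measure_mono (fun ω h => ⟨n, h⟩)
          have := le_trans hle1 (hgap _ hlt)
          simpa [Set.indicator_of_mem hg, Set.indicator_of_notMem (by simpa using hg : g ∉ Bᶜ)]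
            using this
        · have : μ {ω : ℕ → E →L[ℝ] E | st8rP n ω (g v) = 0} ≤ 1 := prob_le_one
          simpa [Set.indicator_of_notMem hg,
            Set.indicator_of_mem (by simpa using hg : g ∈ Bᶜ)] using this
      refine le_trans (lintegral_mono hpt) ?_
      rw [lintegral_add_left (measurable_const.indicator hBm.compl)]
      rw [lintegral_indicator_const hBm.compl, lintegral_indicator_const hBm]
      rw [one_mul]
    have hsup1 : (⨆ n, μ {ω : ℕ → E →L[ℝ] E | st8rP n ω v = 0}) = 1 := by
      rw [← st8_mu_S]
      exact (st8K_mem_iff v).mp hv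
    have hc1 : ν Bᶜ + ENNReal.ofReal α * ν B < 1 := by
      have h1 : ENNReal.ofReal α * ν B < ν B := by
        conv_rhs => rw [← one_mul (ν B)]
        exact ENNReal.mul_lt_mul_left hB (measure_ne_top ν B)
          (ENNReal.ofReal_lt_one.mpr hα)
      calc ν Bᶜ + ENNReal.ofReal α * ν B < ν Bᶜ + ν B :=
            ENNReal.add_lt_add_left (measure_ne_top ν Bᶜ) h1
        _ = 1 := by rw [add_comm, measure_add_measure_compl hBm, measure_univ]
    have : (1:ℝ≥0∞) ≤ ν Bᶜ + ENNReal.ofReal α * ν B := by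
      rw [← hsup1]
      refine iSup_le (fun n => ?_)
      cases n with
      | zero =>
        have : {ω : ℕ → E →L[ℝ] E | st8rP 0 ω v = 0} = ∅ := by
          ext ω
          simp [st8rP_zero, hvne]
        rw [this, measure_empty]
        exact zero_le
      | succ n => exact hbound n
    exact absurd (lt_of_le_of_lt this hc1) (lt_irrefl _)
  have := measure_add_measure_compl (μ := ν) hBm.compl
  rw [compl_compl, hB0, add_zero, measure_univ] at this
  exact this

end St8f


/-- the kernel-hitting probabilities are bounded away from `1` outside a
ν-almost surely invariant subspace. -/
theorem statement_8
    {E : Type*} [NormedAddCommGroup E] [InnerProductSpace ℝ E] [FiniteDimensional ℝ E]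
    (hdim : 2 ≤ Module.finrank ℝ E)
    [MeasurableSpace (E →L[ℝ] E)] [BorelSpace (E →L[ℝ] E)]
    (ν : Measure (E →L[ℝ] E)) [IsProbabilityMeasure ν]
    (μ : Measure (ℕ → E →L[ℝ] E)) (hμ : IsIIDOf μ ν) :
    (∃ α : ℝ, α < 1 ∧ ∀ v : E,
      (⨆ n : ℕ, μ {ω | wprod n ω v = 0}) ≤ ENNReal.ofReal α ∨
      (⨆ n : ℕ, μ {ω | wprod n ω v = 0}) = 1) ∧
    ∃ K : Submodule ℝ E,
      (K : Set E) = {v : E | (⨆ n : ℕ, μ {ω | wprod n ω v = 0}) = 1} ∧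
      ν {g | ∀ v ∈ K, g v ∈ K} = 1 := by
  haveI : IsProbabilityMeasure μ := st8_isProb hμ
  obtain ⟨α, hα, hgap⟩ := st8_gap (ν := ν) hμ
  have hsup : ∀ v : E, (⨆ n : ℕ, μ {ω | wprod n ω v = 0})
      = μ {ω : ℕ → E →L[ℝ] E | v ∈ st8L ω} := st8_sup_wprod hμ
  constructor
  · refine ⟨α, hα, fun v => ?_⟩
    rw [hsup v]
    rcases lt_or_eq_of_le (prob_le_one (μ := μ)) with h | h
    · exact Or.inl (hgap v h)
    · exact Or.inr h
  · refine ⟨st8K (E := E) μ, ?_, ?_⟩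
    · ext v
      simp only [SetLike.mem_coe, Set.mem_setOf_eq, hsup v]
      exact st8K_mem_iff v
    · obtain ⟨sK, hsK⟩ := IsNoetherian.noetherian (st8K (E := E) μ)
      have hsKmem : ∀ x ∈ sK, (x : E) ∈ st8K (E := E) μ :=
        fun x hx => hsK ▸ Submodule.subset_span hx
      have hI : ν (⋂ x ∈ sK, {g : E →L[ℝ] E | g x ∈ st8K (E := E) μ}) = 1 :=
        st8_finite_inter_one sK _ (fun i _ => st8_measSet_gvK i)
          (fun i hi => st8_invariance hμ hα hgap (hsKmem i hi))
      refine le_antisymm prob_le_one ?_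
      rw [← hI]
      refine measure_mono ?_
      intro g hg
      simp only [Set.mem_iInter, Set.mem_setOf_eq] at hg ⊢
      intro x hx
      have hxspan : x ∈ Submodule.span ℝ (↑sK : Set E) := by rw [hsK]; exact hx
      have hmap : g x ∈ Submodule.map (g : E →ₗ[ℝ] E) (Submodule.span ℝ (↑sK : Set E)) :=
        Submodule.mem_map_of_mem hxspan
      rw [Submodule.map_span] at hmap
      refine Submodule.span_le.mpr ?_ hmap
      rintro y ⟨x', hx', rfl⟩
      exact hg x' hx'
end

section
/- Let ν be any Borel probability measure on End(E). Then there exists a sequence (V_k)_{k ∈ ℕ} of linear subspaces of E, each of dimension at most dim(E) − rk(ν), such that underline-ker(ν) = ⋃_{k ∈ ℕ} V_k. -/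
open MeasureTheory Filter Topology
open scoped ENNReal NNReal

attribute [local instance] Classical.propDecidable

/-- The eventual rank of `ν`: the largest `r` such that `ν^{*n}{rank < r} = 0` for all `n`. -/
noncomputable def evRank {E : Type*} [NormedAddCommGroup E] [InnerProductSpace ℝ E]
    [MeasurableSpace (E →L[ℝ] E)] (ν : Measure (E →L[ℝ] E)) : ℕ :=
  sSup {r : ℕ | ∀ n : ℕ,
    convPow ν n {γ : E →L[ℝ] E | Module.finrank ℝ (LinearMap.range (γ : E →ₗ[ℝ] E)) < r} = 0}


section AuxSt9
set_option linter.unusedSectionVars false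

open MeasureTheory

variable {E : Type*} [NormedAddCommGroup E] [InnerProductSpace ℝ E] [FiniteDimensional ℝ E]
variable [MeasurableSpace (E →L[ℝ] E)] [BorelSpace (E →L[ℝ] E)]

lemma st9_continuous_finProd (n : ℕ) :
    Continuous fun x : Fin n → E →L[ℝ] E => (List.ofFn x).prod := by
  induction n with
  | zero => simpa using continuous_const
  | succ n ih =>
    have h : (fun x : Fin (n+1) → E →L[ℝ] E => (List.ofFn x).prod)
        = fun x => x 0 * (List.ofFn fun i : Fin n => x i.succ).prod := by
      funext x; rw [List.ofFn_succ, List.prod_cons]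
    rw [h]
    exact (continuous_apply 0).mul (ih.comp (continuous_pi fun i => continuous_apply i.succ))

lemma st9_wprod_eq (n : ℕ) (ω : ℕ → E →L[ℝ] E) :
    wprod n ω = (List.ofFn fun i : Fin n => ω i).prod := by
  unfold wprod
  rw [List.ofFn_eq_map, show List.range n = (List.finRange n).map Fin.val from
    List.ext_getElem (by simp) (by simp), List.map_map]
  rfl

lemma st9_measurable_wprod (n : ℕ) : Measurable (wprod (E := E) n) := by
  have h : wprod (E := E) n = (fun x : Fin n → E →L[ℝ] E => (List.ofFn x).prod)
      ∘ (fun ω (i : Fin n) => ω i) := funext fun ω => st9_wprod_eq n ω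
  rw [h]
  exact (st9_continuous_finProd n).measurable.comp
    (measurable_pi_lambda _ fun i => measurable_pi_apply (i : ℕ))

lemma st9_convPow_prob (ν : Measure (E →L[ℝ] E)) [IsProbabilityMeasure ν] (n : ℕ) :
    IsProbabilityMeasure (convPow ν n) := by
  induction n with
  | zero => rw [convPow]; infer_instance
  | succ n ih =>
    rw [convPow]
    exact Measure.isProbabilityMeasure_map (measurable_fst.mul measurable_snd).aemeasurable

lemma st9_map_pi (ν : Measure (E →L[ℝ] E)) [IsProbabilityMeasure ν] (n : ℕ) :
    (Measure.pi fun _ : Fin n => ν).map (fun x => (List.ofFn x).prod) = convPow ν n := by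
  induction n with
  | zero =>
    have h : (fun x : Fin 0 → E →L[ℝ] E => (List.ofFn x).prod) = fun _ => (1 : E →L[ℝ] E) := by
      funext x; simp
    rw [h, Measure.map_const, measure_univ, one_smul]
    rfl
  | succ n ih =>
    have hmp := measurePreserving_piFinSuccAbove (fun _ : Fin (n+1) => ν) 0
    set e := MeasurableEquiv.piFinSuccAbove (fun _ : Fin (n+1) => E →L[ℝ] E) 0 with he
    have hmulmeas : Measurable
        (fun p : (E →L[ℝ] E) × (Fin n → E →L[ℝ] E) => p.1 * (List.ofFn p.2).prod) :=
      measurable_fst.mul ((st9_continuous_finProd n).measurable.comp measurable_snd)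
    have hcomp : (fun x : Fin (n+1) → E →L[ℝ] E => (List.ofFn x).prod)
        = (fun p : (E →L[ℝ] E) × (Fin n → E →L[ℝ] E) => p.1 * (List.ofFn p.2).prod) ∘ ⇑e := by
      funext x
      simp only [Function.comp_apply, he, MeasurableEquiv.piFinSuccAbove, MeasurableEquiv.coe_mk,
        Equiv.coe_fn_symm_mk, List.ofFn_succ, List.prod_cons, Fin.zero_succAbove]
      rfl
    calc (Measure.pi fun _ : Fin (n+1) => ν).map (fun x => (List.ofFn x).prod)
        = ((Measure.pi fun _ : Fin (n+1) => ν).map ⇑e).map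
            (fun p : (E →L[ℝ] E) × (Fin n → E →L[ℝ] E) => p.1 * (List.ofFn p.2).prod) := by
          rw [Measure.map_map hmulmeas e.measurable, hcomp]
      _ = (ν.prod (Measure.pi fun _ : Fin n => ν)).map
            (fun p : (E →L[ℝ] E) × (Fin n → E →L[ℝ] E) => p.1 * (List.ofFn p.2).prod) := by
          rw [hmp.map_eq]
      _ = ((ν.prod (Measure.pi fun _ : Fin n => ν)).map
            (Prod.map id (fun x : Fin n → E →L[ℝ] E => (List.ofFn x).prod))).map
            (fun p : (E →L[ℝ] E) × (E →L[ℝ] E) => p.1 * p.2) := by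
          rw [Measure.map_map (g := fun p : (E →L[ℝ] E) × (E →L[ℝ] E) => p.1 * p.2)
            (measurable_fst.mul measurable_snd)
            (measurable_id.prodMap (st9_continuous_finProd n).measurable)]
          rfl
      _ = (ν.prod (convPow ν n)).map (fun p : (E →L[ℝ] E) × (E →L[ℝ] E) => p.1 * p.2) := by
          rw [← Measure.map_prod_map ν (Measure.pi fun _ : Fin n => ν) measurable_id
            (st9_continuous_finProd n).measurable, Measure.map_id, ih]
      _ = convPow ν (n+1) := rfl

lemma st9_map_restrict {ν : Measure (E →L[ℝ] E)} [IsProbabilityMeasure ν]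
    {μ : Measure (ℕ → E →L[ℝ] E)} (hμ : IsIIDOf μ ν) (n : ℕ) :
    μ.map (fun ω (i : Fin n) => ω (i : ℕ)) = Measure.pi fun _ : Fin n => ν := by
  symm
  apply Measure.pi_eq
  intro s hs
  have hmeasres : Measurable (fun (ω : ℕ → E →L[ℝ] E) (i : Fin n) => ω (i : ℕ)) :=
    measurable_pi_lambda _ fun i => measurable_pi_apply (i : ℕ)
  rw [Measure.map_apply hmeasres (MeasurableSet.univ_pi hs)]
  have h : (fun ω (i : Fin n) => ω (i : ℕ)) ⁻¹' Set.pi Set.univ s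
      = {ω : ℕ → E →L[ℝ] E | ∀ i : Fin n, ω (i : ℕ) ∈ s i} := by
    ext ω; simp [Set.mem_pi]
  rw [h, hμ n s hs]

lemma st9_map_wprod {ν : Measure (E →L[ℝ] E)} [IsProbabilityMeasure ν]
    {μ : Measure (ℕ → E →L[ℝ] E)} (hμ : IsIIDOf μ ν) (n : ℕ) :
    μ.map (wprod n) = convPow ν n := by
  have h : wprod (E := E) n = (fun x : Fin n → E →L[ℝ] E => (List.ofFn x).prod)
      ∘ (fun ω (i : Fin n) => ω (i : ℕ)) := funext fun ω => st9_wprod_eq n ω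
  rw [h, ← Measure.map_map (st9_continuous_finProd n).measurable
    (measurable_pi_lambda _ fun i => measurable_pi_apply (i : ℕ)),
    st9_map_restrict hμ n, st9_map_pi ν n]

/-- The set of endomorphisms vanishing on `W`. -/
def st9_B (W : Submodule ℝ E) : Set (E →L[ℝ] E) := {γ | ∀ v ∈ W, γ v = 0}

lemma st9_isClosed_eval (v : E) : IsClosed {γ : E →L[ℝ] E | γ v = 0} := by
  have h : {γ : E →L[ℝ] E | γ v = 0} = (fun γ : E →L[ℝ] E => γ v) ⁻¹' {0} := rfl
  rw [h]
  exact isClosed_singleton.preimage (ContinuousLinearMap.apply ℝ E v).continuous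

lemma st9_isClosed_B (W : Submodule ℝ E) : IsClosed (st9_B W) := by
  have h : st9_B W = ⋂ v ∈ (W : Set E), {γ : E →L[ℝ] E | γ v = 0} := by
    ext γ; simp [st9_B]
  rw [h]
  exact isClosed_biInter fun v _ => st9_isClosed_eval v

lemma st9_B_sup (W X : Submodule ℝ E) : st9_B (W ⊔ X) = st9_B W ∩ st9_B X := by
  ext γ
  constructor
  · intro h
    exact ⟨fun v hv => h v (Submodule.mem_sup_left hv),
      fun v hv => h v (Submodule.mem_sup_right hv)⟩
  · rintro ⟨h1, h2⟩ v hv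
    obtain ⟨y, hy, z, hz, rfl⟩ := Submodule.mem_sup.1 hv
    rw [map_add, h1 y hy, h2 z hz, add_zero]

lemma st9_B_span (v : E) : st9_B (Submodule.span ℝ {v}) = {γ : E →L[ℝ] E | γ v = 0} := by
  ext γ
  constructor
  · intro h; exact h v (Submodule.mem_span_singleton_self v)
  · intro h w hw
    obtain ⟨a, rfl⟩ := Submodule.mem_span_singleton.1 hw
    have h' : γ v = 0 := h
    rw [ContinuousLinearMap.map_smul, h', smul_zero]

lemma st9_evRank_null (ν : Measure (E →L[ℝ] E)) [IsProbabilityMeasure ν] (n : ℕ) :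
    convPow ν n {γ : E →L[ℝ] E | Module.finrank ℝ (LinearMap.range (γ : E →ₗ[ℝ] E)) < evRank ν} = 0 := by
  have h := Nat.sSup_mem (s := {r : ℕ | ∀ n : ℕ,
      convPow ν n {γ : E →L[ℝ] E | Module.finrank ℝ (LinearMap.range (γ : E →ₗ[ℝ] E)) < r} = 0})
    ⟨0, fun n => by simp⟩ ?_
  · exact h n
  · refine ⟨Module.finrank ℝ E, fun r hr => ?_⟩
    by_contra hcon
    push_neg at hcon
    have h0 := hr 0
    have huniv : {γ : E →L[ℝ] E | Module.finrank ℝ (LinearMap.range (γ : E →ₗ[ℝ] E)) < r} = Set.univ := by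
      ext γ
      simp only [Set.mem_setOf_eq, Set.mem_univ, iff_true]
      exact lt_of_le_of_lt (Submodule.finrank_le _) hcon
    haveI := st9_convPow_prob (E := E) ν 0
    rw [huniv, measure_univ] at h0
    exact one_ne_zero h0

lemma st9_dim_le (ν : Measure (E →L[ℝ] E)) [IsProbabilityMeasure ν] {W : Submodule ℝ E}
    {n : ℕ} (h : convPow ν n (st9_B W) ≠ 0) :
    Module.finrank ℝ W ≤ Module.finrank ℝ E - evRank ν := by
  obtain ⟨γ, hγW, hγr⟩ : ∃ γ ∈ st9_B W, evRank ν ≤ Module.finrank ℝ (LinearMap.range (γ : E →ₗ[ℝ] E)) := by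
    by_contra hc
    push_neg at hc
    apply h
    have hsub : st9_B W ⊆ {γ : E →L[ℝ] E | Module.finrank ℝ (LinearMap.range (γ : E →ₗ[ℝ] E)) < evRank ν} :=
      fun γ hγ => hc γ hγ
    exact le_antisymm ((measure_mono hsub).trans_eq (st9_evRank_null ν n)) zero_le
  set ψ : E →ₗ[ℝ] E := (γ : E →ₗ[ℝ] E) with hψ
  have hker : W ≤ LinearMap.ker ψ := fun v hv => LinearMap.mem_ker.2 (hγW v hv)
  have h1 : Module.finrank ℝ W ≤ Module.finrank ℝ (LinearMap.ker ψ) :=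
    Submodule.finrank_mono hker
  have h2 := LinearMap.finrank_range_add_finrank_ker ψ
  have h3 : LinearMap.range ψ = LinearMap.range (γ : E →ₗ[ℝ] E) := by
    ext x; simp [hψ, LinearMap.mem_range]
  rw [h3] at h2 hγr
  omega

end AuxSt9

/-- the essential kernel is a countable union of subspaces of dimension
at most `dim E - rk(ν)`. -/
theorem statement_9
    {E : Type*} [NormedAddCommGroup E] [InnerProductSpace ℝ E] [FiniteDimensional ℝ E]
    (hdim : 2 ≤ Module.finrank ℝ E)
    [MeasurableSpace (E →L[ℝ] E)] [BorelSpace (E →L[ℝ] E)]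
    (ν : Measure (E →L[ℝ] E)) [IsProbabilityMeasure ν]
    (μ : Measure (ℕ → E →L[ℝ] E)) (hμ : IsIIDOf μ ν) :
    ∃ V : ℕ → Submodule ℝ E,
      (∀ k : ℕ, Module.finrank ℝ (V k) ≤ Module.finrank ℝ E - evRank ν) ∧
      {v : E | ∃ n : ℕ, 0 < μ {ω | wprod n ω v = 0}} = ⋃ k : ℕ, (V k : Set E) := by
  classical
  haveI hconvprob : ∀ n, IsProbabilityMeasure (convPow ν n) := st9_convPow_prob ν
  -- translate the probabilities on `μ` into probabilities on `convPow ν n`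
  have hlaw : ∀ (n : ℕ) (v : E),
      μ {ω | wprod n ω v = 0} = convPow ν n {γ : E →L[ℝ] E | γ v = 0} := by
    intro n v
    have h1 : {ω : ℕ → E →L[ℝ] E | wprod n ω v = 0}
        = wprod n ⁻¹' {γ : E →L[ℝ] E | γ v = 0} := rfl
    rw [h1, ← Measure.map_apply (st9_measurable_wprod n) (st9_isClosed_eval v).measurableSet,
      st9_map_wprod hμ n]
  -- the collection of "good" subspaces at time n and its maximal elements
  set Good : ℕ → Submodule ℝ E → Prop := fun n W => convPow ν n (st9_B W) ≠ 0 with hGood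
  set Max : ℕ → Set (Submodule ℝ E) :=
    fun n => {W | Good n W ∧ ∀ X, Good n X → W ≤ X → W = X} with hMax
  -- every good subspace lies below a maximal good subspace
  have hexmax : ∀ n W, Good n W → ∃ M ∈ Max n, W ≤ M := by
    intro n W hW
    obtain ⟨M, hMmem, hmin⟩ := (wellFounded_gt (α := Submodule ℝ E)).has_min
      {X | Good n X ∧ W ≤ X} ⟨W, hW, le_rfl⟩
    refine ⟨M, ⟨hMmem.1, fun X hX hMX => ?_⟩, hMmem.2⟩
    by_contra hne
    exact hmin X ⟨hX, hMmem.2.trans hMX⟩ (lt_of_le_of_ne hMX hne)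
  -- maximal good subspaces give essentially disjoint events, hence are countable
  have hMaxcount : ∀ n, (Max n).Countable := by
    intro n
    have hdisj : Pairwise (Function.onFun (AEDisjoint (convPow ν n))
        (fun W : Max n => st9_B W.1)) := by
      rintro ⟨W, hW⟩ ⟨X, hX⟩ hne
      have hWX : W ≠ X := fun h => hne (Subtype.ext h)
      show convPow ν n (st9_B W ∩ st9_B X) = 0
      rw [← st9_B_sup]
      by_contra h
      have h1 := hW.2 (W ⊔ X) h le_sup_left
      have h2 := hX.2 (W ⊔ X) h le_sup_right
      exact hWX (h1.trans h2.symm)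
    have hcnt := MeasureTheory.Measure.countable_meas_pos_of_disjoint_of_meas_iUnion_ne_top₀
      (μ := convPow ν n) (As := fun W : Max n => st9_B W.1)
      (fun i => (st9_isClosed_B i.1).measurableSet.nullMeasurableSet) hdisj (measure_ne_top _ _)
    have huniv : {i : Max n | 0 < convPow ν n (st9_B i.1)} = Set.univ := by
      ext i
      simpa [pos_iff_ne_zero] using i.2.1
    rw [huniv] at hcnt
    exact Set.countable_coe_iff.mp (Set.countable_univ_iff.mp hcnt)
  -- the countable family of subspaces
  set S : Set (Submodule ℝ E) := insert ⊥ (⋃ n, Max n) with hS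
  have hScnt : S.Countable := (Set.countable_iUnion hMaxcount).insert ⊥
  obtain ⟨f, hf⟩ := hScnt.exists_eq_range ⟨⊥, Set.mem_insert _ _⟩
  refine ⟨f, ?_, ?_⟩
  · intro k
    have hk : f k ∈ S := hf ▸ Set.mem_range_self k
    rcases hk with hk | hk
    · rw [hk]
      simp
    · obtain ⟨n, hn⟩ := Set.mem_iUnion.1 hk
      exact st9_dim_le ν hn.1
  · ext v
    simp only [Set.mem_setOf_eq, Set.mem_iUnion, SetLike.mem_coe]
    constructor
    · rintro ⟨n, hn⟩
      have hGoodspan : Good n (Submodule.span ℝ {v}) := by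
        rw [hGood]
        rw [hlaw n v] at hn
        rw [st9_B_span v]
        exact hn.ne'
      obtain ⟨M, hM, hle⟩ := hexmax n _ hGoodspan
      have hMS : M ∈ S := Set.mem_insert_of_mem _ (Set.mem_iUnion.2 ⟨n, hM⟩)
      obtain ⟨k, hk⟩ := hf ▸ hMS
      exact ⟨k, hk ▸ hle (Submodule.mem_span_singleton_self v)⟩
    · rintro ⟨k, hk⟩
      have hkS : f k ∈ S := hf ▸ Set.mem_range_self k
      rcases hkS with hbot | hmem
      · rw [hbot] at hk
        have hv0 : v = 0 := Submodule.mem_bot ℝ |>.1 hk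
        refine ⟨0, ?_⟩
        have huniv : {ω : ℕ → E →L[ℝ] E | wprod 0 ω v = 0} = Set.univ := by
          ext ω
          simp [hv0]
        rw [huniv]
        haveI : IsProbabilityMeasure μ := by
          constructor
          have h0 := hμ 0 (fun _ => (∅ : Set (E →L[ℝ] E))) (fun i => i.elim0)
          simpa using h0
        simp
      · obtain ⟨n, hn⟩ := Set.mem_iUnion.1 hmem
        refine ⟨n, ?_⟩
        rw [hlaw n v, pos_iff_ne_zero]
        intro h0
        apply hn.1
        have hsub : st9_B (f k) ⊆ {γ : E →L[ℝ] E | γ v = 0} := fun γ hγ => hγ v hk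
        exact le_antisymm ((measure_mono hsub).trans_eq h0) zero_le
end

section
/- Let Γ ⊆ End(E) be a sub-semigroup that is irreducible, i.e., for every nonzero linear functional f on E and every nonzero v ∈ E there exists γ ∈ Γ with f(γ v) ≠ 0. Let T denote the closure in End(E) of the set { c•γ : c ∈ ℝ, γ ∈ Γ }. Suppose u₁, u₂ ∈ E∖{0} and f₁, f₂ are nonzero linear functionals on E such that the rank-one maps x ↦ f₁(x)·u₁ and x ↦ f₂(x)·u₂ both belong to T. Then the rank-one map x ↦ f₂(x)·u₁ also belongs to T. -/
open MeasureTheory Filter Topology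
open scoped ENNReal NNReal

attribute [local instance] Classical.propDecidable

/-- factorization of the rank-one boundary of an irreducible semigroup. -/
theorem statement_10
    {E : Type*} [NormedAddCommGroup E] [InnerProductSpace ℝ E] [FiniteDimensional ℝ E]
    (hdim : 2 ≤ Module.finrank ℝ E)
    (S : Set (E →L[ℝ] E)) (hmul : ∀ a ∈ S, ∀ b ∈ S, a * b ∈ S)
    (hirr : ∀ f : E →L[ℝ] ℝ, f ≠ 0 → ∀ v : E, v ≠ 0 → ∃ γ ∈ S, f (γ v) ≠ 0)
    (u₁ u₂ : E) (f₁ f₂ : E →L[ℝ] ℝ)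
    (hu₁ : u₁ ≠ 0) (hu₂ : u₂ ≠ 0) (hf₁ : f₁ ≠ 0) (hf₂ : f₂ ≠ 0)
    (h₁ : f₁.smulRight u₁ ∈ closure {h : E →L[ℝ] E | ∃ c : ℝ, ∃ γ ∈ S, h = c • γ})
    (h₂ : f₂.smulRight u₂ ∈ closure {h : E →L[ℝ] E | ∃ c : ℝ, ∃ γ ∈ S, h = c • γ}) :
    f₂.smulRight u₁ ∈ closure {h : E →L[ℝ] E | ∃ c : ℝ, ∃ γ ∈ S, h = c • γ} := by
  set M : Set (E →L[ℝ] E) := {h : E →L[ℝ] E | ∃ c : ℝ, ∃ γ ∈ S, h = c • γ} with hM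
  have hMmul : ∀ a ∈ M, ∀ b ∈ M, a * b ∈ M := by
    rintro a ⟨c, γ, hγ, rfl⟩ b ⟨c', γ', hγ', rfl⟩
    exact ⟨c * c', γ * γ', hmul γ hγ γ' hγ', by
      ext x; simp [ContinuousLinearMap.mul_apply, smul_smul, mul_comm]⟩
  have hclmul : ∀ a ∈ closure M, ∀ b ∈ closure M, a * b ∈ closure M := fun a ha b hb =>
    map_mem_closure₂ continuous_mul ha hb hMmul
  have hMsmul : ∀ (c : ℝ), ∀ a ∈ M, c • a ∈ M := by
    rintro c a ⟨c', γ, hγ, rfl⟩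
    exact ⟨c * c', γ, hγ, smul_smul c c' γ⟩
  have hclsmul : ∀ (c : ℝ), ∀ a ∈ closure M, c • a ∈ closure M := fun c a ha =>
    map_mem_closure (continuous_const_smul c) ha (hMsmul c)
  obtain ⟨γ, hγS, hc⟩ := hirr f₁ hf₁ u₂ hu₂
  have hγT : (γ : E →L[ℝ] E) ∈ closure M :=
    subset_closure ⟨1, γ, hγS, (one_smul ℝ γ).symm⟩
  have key : f₁.smulRight u₁ * γ * f₂.smulRight u₂ = (f₁ (γ u₂)) • f₂.smulRight u₁ := by
    ext x
    simp [ContinuousLinearMap.mul_apply, smul_smul, mul_comm]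
  have hmem : (f₁ (γ u₂)) • f₂.smulRight u₁ ∈ closure M :=
    key ▸ hclmul _ (hclmul _ h₁ _ hγT) _ h₂
  have := hclsmul (f₁ (γ u₂))⁻¹ _ hmem
  rwa [smul_smul, inv_mul_cancel₀ hc, one_smul] at this
end

section
/- Let Γ ⊆ End(E) be a strongly irreducible sub-semigroup (for every N ≥ 1, all nonzero linear functionals f₁,…,f_N on E and every nonzero v ∈ E there exists γ ∈ Γ with ∏_{i=1}^N f_i(γ v) ≠ 0, and, dually, for every nonzero functional f and nonzero vectors v₁,…,v_N there exists γ ∈ Γ with ∏_{j=1}^N f(γ v_j) ≠ 0). Let T be the closure in End(E) of { c•γ : c ∈ ℝ, γ ∈ Γ }, and assume T contains a nonzero rank-one map. Then for every ρ ∈ (0,1] there exist an integer N ≥ 1, a constant ε ∈ (0,1], and nonzero rank-one maps π₁,…,π_N ∈ T such that for every h ∈ End(E)∖{0}: #{ k : ‖π_k ∘ h‖ ≥ ε·‖π_k‖·‖h‖ } ≥ (1−ρ)·N and #{ k : ‖h ∘ π_k‖ ≥ ε·‖h‖·‖π_k‖ } ≥ (1−ρ)·N. -/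
open MeasureTheory Filter Topology
open scoped ENNReal NNReal

attribute [local instance] Classical.propDecidable

set_option maxHeartbeats 1000000

section schottkyAux
open Module Submodule

variable {E : Type*} [NormedAddCommGroup E] [InnerProductSpace ℝ E]

lemma T_sandwich (S : Set (E →L[ℝ] E)) (hmul : ∀ a ∈ S, ∀ b ∈ S, a * b ∈ S)
    {p a b : E →L[ℝ] E} (ha : a ∈ S) (hb : b ∈ S)
    (hp : p ∈ closure {h : E →L[ℝ] E | ∃ c : ℝ, ∃ γ ∈ S, h = c • γ}) :
    a * p * b ∈ closure {h : E →L[ℝ] E | ∃ c : ℝ, ∃ γ ∈ S, h = c • γ} := by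
  have hcont : Continuous (fun x : E →L[ℝ] E => a * x * b) :=
    ((continuous_const.mul continuous_id).mul continuous_const)
  have hmaps : Set.MapsTo (fun x : E →L[ℝ] E => a * x * b)
      {h : E →L[ℝ] E | ∃ c : ℝ, ∃ γ ∈ S, h = c • γ}
      {h : E →L[ℝ] E | ∃ c : ℝ, ∃ γ ∈ S, h = c • γ} := by
    rintro x ⟨c, γ, hγ, rfl⟩
    refine ⟨c, a * γ * b, hmul _ (hmul _ ha _ hγ) _ hb, ?_⟩
    show a * (c • γ) * b = c • (a * γ * b)
    ext x
    simp [ContinuousLinearMap.mul_apply]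
  simpa using map_mem_closure hcont hp hmaps

lemma T_smul (S : Set (E →L[ℝ] E)) (c : ℝ) {p : E →L[ℝ] E}
    (hp : p ∈ closure {h : E →L[ℝ] E | ∃ c : ℝ, ∃ γ ∈ S, h = c • γ}) :
    c • p ∈ closure {h : E →L[ℝ] E | ∃ c : ℝ, ∃ γ ∈ S, h = c • γ} := by
  have hcont : Continuous (fun x : E →L[ℝ] E => c • x) := continuous_const_smul c
  have hmaps : Set.MapsTo (fun x : E →L[ℝ] E => c • x)
      {h : E →L[ℝ] E | ∃ c : ℝ, ∃ γ ∈ S, h = c • γ}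
      {h : E →L[ℝ] E | ∃ c : ℝ, ∃ γ ∈ S, h = c • γ} := by
    rintro x ⟨c', γ, hγ, rfl⟩
    refine ⟨c * c', γ, hγ, ?_⟩
    show c • (c' • γ) = (c * c') • γ
    rw [smul_smul]
  simpa using map_mem_closure hcont hp hmaps


end schottkyAux

section schottkyAux2
open Module Submodule

variable {E : Type*} [NormedAddCommGroup E] [InnerProductSpace ℝ E] [FiniteDimensional ℝ E]

/-- A proper subspace is annihilated by a nonzero continuous functional. -/
lemma aux_exists_functional (W : Submodule ℝ E) (hW : W ≠ ⊤) :
    ∃ g : E →L[ℝ] ℝ, g ≠ 0 ∧ ∀ x ∈ W, g x = 0 := by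
  have hW' : Wᗮ ≠ ⊥ := by
    simp only [ne_eq, Submodule.orthogonal_eq_bot_iff]; exact hW
  obtain ⟨x, hxW, hx0⟩ := Submodule.exists_mem_ne_zero_of_ne_bot hW'
  refine ⟨innerSL ℝ x, ?_, fun y hy => ?_⟩
  · intro h
    have : (innerSL ℝ x) x = 0 := by rw [h]; rfl
    simp only [innerSL_apply_apply, real_inner_self_eq_norm_sq] at this
    exact hx0 (by simpa using this)
  · have := (Submodule.mem_orthogonal W x).mp hxW y hy
    simpa [real_inner_comm] using this

/-- Finitely many functionals, fewer than the dimension, have a common nonzero kernel vector. -/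
lemma aux_common_kernel (t : Finset ℕ) (f : ℕ → (E →L[ℝ] ℝ))
    (ht : t.card < Module.finrank ℝ E) :
    ∃ w : E, w ≠ 0 ∧ ∀ j ∈ t, f j w = 0 := by
  classical
  set x : ℕ → E := fun j => (InnerProductSpace.toDual ℝ E).symm (f j) with hx
  set W : Submodule ℝ E := span ℝ ((t.image x : Finset E) : Set E) with hWdef
  have hW : W ≠ ⊤ := by
    intro h
    have h1 : finrank ℝ W ≤ (t.image x).card := finrank_span_finset_le_card _
    have h2 : (t.image x).card ≤ t.card := Finset.card_image_le
    rw [h, finrank_top] at h1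
    omega
  have hW' : Wᗮ ≠ ⊥ := by simp only [ne_eq, Submodule.orthogonal_eq_bot_iff]; exact hW
  obtain ⟨w, hwW, hw0⟩ := Submodule.exists_mem_ne_zero_of_ne_bot hW'
  refine ⟨w, hw0, fun j hj => ?_⟩
  have hxj : x j ∈ W := Submodule.subset_span (by simpa using Finset.mem_image_of_mem x hj)
  have h1 := (Submodule.mem_orthogonal W w).mp hwW (x j) hxj
  have h2 : f j w = inner ℝ (x j) w := (InnerProductSpace.toDual_symm_apply).symm
  rw [h2]; exact h1


lemma hirr1_finset (S : Set (E →L[ℝ] E))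
    (hirr1 : ∀ (N : ℕ) (f : Fin (N + 1) → (E →L[ℝ] ℝ)) (v : E), (∀ i, f i ≠ 0) → v ≠ 0 →
      ∃ γ ∈ S, (∏ i, f i (γ v)) ≠ 0)
    {α : Type*} (𝒜 : Finset α) (g : α → (E →L[ℝ] ℝ)) (v : E)
    (hg : ∀ a ∈ 𝒜, g a ≠ 0) (hv : v ≠ 0) (f₀ : E →L[ℝ] ℝ) (hf₀ : f₀ ≠ 0) :
    ∃ γ ∈ S, ∀ a ∈ 𝒜, g a (γ v) ≠ 0 := by
  rcases 𝒜.eq_empty_or_nonempty with rfl | hne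
  · obtain ⟨γ, hγ, -⟩ := hirr1 0 (fun _ => f₀) v (fun _ => hf₀) hv
    exact ⟨γ, hγ, by simp⟩
  · have hpos : 0 < 𝒜.card := Finset.card_pos.mpr hne
    have hn : 𝒜.card - 1 + 1 = 𝒜.card := Nat.succ_pred_eq_of_pos hpos
    set e := 𝒜.equivFin with he
    set F : Fin (𝒜.card - 1 + 1) → (E →L[ℝ] ℝ) :=
      fun i => g (e.symm (Fin.cast hn i)) with hF
    obtain ⟨γ, hγ, hprod⟩ := hirr1 (𝒜.card - 1) F v
      (fun i => hg _ (e.symm (Fin.cast hn i)).2) hv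
    refine ⟨γ, hγ, fun a ha => ?_⟩
    have := Finset.prod_ne_zero_iff.mp hprod
    have hj := this (Fin.cast hn.symm (e ⟨a, ha⟩)) (Finset.mem_univ _)
    have hFa : F (Fin.cast hn.symm (e ⟨a, ha⟩)) = g a := by
      show g (e.symm (Fin.cast hn (Fin.cast hn.symm (e ⟨a, ha⟩)))) = g a
      have h1 : Fin.cast hn (Fin.cast hn.symm (e ⟨a, ha⟩)) = e ⟨a, ha⟩ := by ext; simp
      rw [h1, Equiv.symm_apply_apply]
    rwa [hFa] at hj

lemma hirr2_finset (S : Set (E →L[ℝ] E))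
    (hirr2 : ∀ (N : ℕ) (f : E →L[ℝ] ℝ) (v : Fin (N + 1) → E), f ≠ 0 → (∀ j, v j ≠ 0) →
      ∃ γ ∈ S, (∏ j, f (γ (v j))) ≠ 0)
    {α : Type*} (𝒜 : Finset α) (w : α → E) (f : E →L[ℝ] ℝ)
    (hf : f ≠ 0) (hw : ∀ a ∈ 𝒜, w a ≠ 0) (v₀ : E) (hv₀ : v₀ ≠ 0) :
    ∃ γ ∈ S, ∀ a ∈ 𝒜, f (γ (w a)) ≠ 0 := by
  rcases 𝒜.eq_empty_or_nonempty with rfl | hne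
  · obtain ⟨γ, hγ, -⟩ := hirr2 0 f (fun _ => v₀) hf (fun _ => hv₀)
    exact ⟨γ, hγ, by simp⟩
  · have hpos : 0 < 𝒜.card := Finset.card_pos.mpr hne
    have hn : 𝒜.card - 1 + 1 = 𝒜.card := Nat.succ_pred_eq_of_pos hpos
    set e := 𝒜.equivFin with he
    set W : Fin (𝒜.card - 1 + 1) → E := fun i => w (e.symm (Fin.cast hn i)) with hW
    obtain ⟨γ, hγ, hprod⟩ := hirr2 (𝒜.card - 1) f W hf
      (fun i => hw _ (e.symm (Fin.cast hn i)).2)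
    refine ⟨γ, hγ, fun a ha => ?_⟩
    have := Finset.prod_ne_zero_iff.mp hprod
    have hj := this (Fin.cast hn.symm (e ⟨a, ha⟩)) (Finset.mem_univ _)
    have hWa : W (Fin.cast hn.symm (e ⟨a, ha⟩)) = w a := by
      show w (e.symm (Fin.cast hn (Fin.cast hn.symm (e ⟨a, ha⟩)))) = w a
      have h1 : Fin.cast hn (Fin.cast hn.symm (e ⟨a, ha⟩)) = e ⟨a, ha⟩ := by ext; simp
      rw [h1, Equiv.symm_apply_apply]
    rwa [hWa] at hj


lemma build_vecs {d : ℕ} (hdE : finrank ℝ E = d) (hd1 : 1 ≤ d)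
    (S : Set (E →L[ℝ] E))
    (hirr1 : ∀ (N : ℕ) (f : Fin (N + 1) → (E →L[ℝ] ℝ)) (v : E), (∀ i, f i ≠ 0) → v ≠ 0 →
      ∃ γ ∈ S, (∏ i, f i (γ v)) ≠ 0)
    (u : E) (hu : u ≠ 0) :
    ∀ n : ℕ, ∃ w : ℕ → E, (∀ i < n, ∃ γ ∈ S, w i = γ u) ∧
      (∀ i < n, ∀ s : Finset ℕ, (∀ j ∈ s, j < i) → s.card ≤ d - 1 →
        w i ∉ span ℝ (w '' s)) := by
  intro n
  induction n with
  | zero => exact ⟨fun _ => 0, by omega, by omega⟩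
  | succ n ih =>
    obtain ⟨w, h1, h2⟩ := ih
    set 𝒜 : Finset (Finset ℕ) :=
      (Finset.range n).powerset.filter (fun s => s.card ≤ d - 1) with h𝒜
    have hspan : ∀ s ∈ 𝒜, span ℝ (w '' s) ≠ ⊤ := by
      intro s hs htop
      rw [h𝒜, Finset.mem_filter] at hs
      have h1' : finrank ℝ (span ℝ (w '' s)) ≤ (s.image w).card := by
        rw [← Finset.coe_image]; exact finrank_span_finset_le_card _
      have h2' : (s.image w).card ≤ s.card := Finset.card_image_le
      rw [htop, finrank_top, hdE] at h1'
      omega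
    have hgex : ∀ s ∈ 𝒜, ∃ g : E →L[ℝ] ℝ, g ≠ 0 ∧ ∀ x ∈ span ℝ (w '' s), g x = 0 :=
      fun s hs => aux_exists_functional _ (hspan s hs)
    choose! g hg0 hgker using hgex
    have hf₀ : (innerSL ℝ u) ≠ 0 := by
      intro h
      have : (innerSL ℝ u) u = 0 := by rw [h]; rfl
      simp only [innerSL_apply_apply, real_inner_self_eq_norm_sq] at this
      exact hu (by simpa using this)
    obtain ⟨γ, hγS, hγ⟩ := hirr1_finset S hirr1 𝒜 g u hg0 hu _ hf₀
    refine ⟨Function.update w n (γ u), ?_, ?_⟩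
    · intro i hi
      rcases Nat.lt_or_ge i n with h | h
      · rw [Function.update_of_ne (by omega)]
        exact h1 i h
      · have : i = n := by omega
        subst this
        exact ⟨γ, hγS, (Function.update_self i _ _)⟩
    · intro i hi s hs hscard
      have himg : Function.update w n (γ u) '' s = w '' s := by
        apply Set.image_congr
        intro j hj
        have hji : j < i := hs j (by exact_mod_cast hj)
        exact Function.update_of_ne (by omega) _ _
      rw [himg]
      rcases Nat.lt_or_ge i n with h | h
      · rw [Function.update_of_ne (by omega)]
        exact h2 i h s hs hscard
      · have : i = n := by omega
        subst this
        rw [Function.update_self]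
        intro hmem
        have hs𝒜 : s ∈ 𝒜 := by
          rw [h𝒜, Finset.mem_filter, Finset.mem_powerset]
          exact ⟨fun j hj => Finset.mem_range.mpr (hs j hj), hscard⟩
        exact hγ s hs𝒜 (hgker s hs𝒜 _ hmem)

lemma build_funcs {d : ℕ} (hdE : finrank ℝ E = d) (hd1 : 1 ≤ d)
    (S : Set (E →L[ℝ] E))
    (hirr2 : ∀ (N : ℕ) (f : E →L[ℝ] ℝ) (v : Fin (N + 1) → E), f ≠ 0 → (∀ j, v j ≠ 0) →
      ∃ γ ∈ S, (∏ j, f (γ (v j))) ≠ 0)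
    (f₀ : E →L[ℝ] ℝ) (hf₀ : f₀ ≠ 0) (v₀ : E) (hv₀ : v₀ ≠ 0) :
    ∀ n : ℕ, ∃ F : ℕ → (E →L[ℝ] ℝ), (∀ i < n, ∃ γ ∈ S, F i = f₀.comp γ) ∧
      (∀ i < n, ∀ s : Finset ℕ, (∀ j ∈ s, j < i) → s.card ≤ d - 1 →
        F i ∉ span ℝ (F '' s)) := by
  intro n
  induction n with
  | zero => exact ⟨fun _ => 0, by omega, by omega⟩
  | succ n ih =>
    obtain ⟨F, h1, h2⟩ := ih
    set 𝒜 : Finset (Finset ℕ) :=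
      (Finset.range n).powerset.filter (fun s => s.card ≤ d - 1) with h𝒜
    have hwex : ∀ s ∈ 𝒜, ∃ w : E, w ≠ 0 ∧ ∀ j ∈ s, F j w = 0 := by
      intro s hs
      rw [h𝒜, Finset.mem_filter] at hs
      exact aux_common_kernel s F (by omega)
    choose! wv hw0 hwker using hwex
    obtain ⟨γ, hγS, hγ⟩ := hirr2_finset S hirr2 𝒜 wv f₀ hf₀ hw0 v₀ hv₀
    refine ⟨Function.update F n (f₀.comp γ), ?_, ?_⟩
    · intro i hi
      rcases Nat.lt_or_ge i n with h | h
      · rw [Function.update_of_ne (by omega)]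
        exact h1 i h
      · have : i = n := by omega
        subst this
        exact ⟨γ, hγS, (Function.update_self i _ _)⟩
    · intro i hi s hs hscard
      have himg : Function.update F n (f₀.comp γ) '' s = F '' s := by
        apply Set.image_congr
        intro j hj
        have hji : j < i := hs j (by exact_mod_cast hj)
        exact Function.update_of_ne (by omega) _ _
      rw [himg]
      rcases Nat.lt_or_ge i n with h | h
      · rw [Function.update_of_ne (by omega)]
        exact h2 i h s hs hscard
      · have : i = n := by omega
        subst this
        rw [Function.update_self]
        intro hmem
        have hs𝒜 : s ∈ 𝒜 := by
          rw [h𝒜, Finset.mem_filter, Finset.mem_powerset]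
          exact ⟨fun j hj => Finset.mem_range.mpr (hs j hj), hscard⟩
        -- every element of the span vanishes at wv s
        have hvanish : ∀ q ∈ span ℝ (F '' s), (q : E →L[ℝ] ℝ) (wv s) = 0 := by
          intro q hq
          have hker : F '' s ⊆ (LinearMap.ker (ContinuousLinearMap.apply ℝ ℝ (wv s) : (E →L[ℝ] ℝ) →ₗ[ℝ] ℝ) :
              Submodule ℝ (E →L[ℝ] ℝ)) := by
            rintro _ ⟨j, hj, rfl⟩
            simp only [SetLike.mem_coe, LinearMap.mem_ker]
            exact hwker s hs𝒜 j (by exact_mod_cast hj)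
          have := Submodule.span_le.mpr hker hq
          simpa using this
        have := hvanish _ hmem
        simp only [ContinuousLinearMap.comp_apply] at this
        exact hγ s hs𝒜 this


lemma smulRight_mul_eq (f : E →L[ℝ] ℝ) (u : E) (h : E →L[ℝ] E) :
    (f.smulRight u) * h = (f.comp h).smulRight u := by
  ext x
  simp [ContinuousLinearMap.mul_apply]

lemma mul_smulRight_eq (f : E →L[ℝ] ℝ) (u : E) (h : E →L[ℝ] E) :
    h * (f.smulRight u) = f.smulRight (h u) := by
  ext x
  simp [ContinuousLinearMap.mul_apply]

lemma smulRight_smul_smul (a b : ℝ) (f : E →L[ℝ] ℝ) (u : E) :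
    (a • f).smulRight (b • u) = (a * b) • (f.smulRight u) := by
  ext x
  simp only [ContinuousLinearMap.smulRight_apply, ContinuousLinearMap.smul_apply,
    ContinuousLinearMap.coe_smul', Pi.smul_apply, smul_eq_mul, smul_smul]
  ring_nf

lemma range_smulRight (f : E →L[ℝ] ℝ) (u : E) (hf : f ≠ 0) (hu : u ≠ 0) :
    Module.finrank ℝ (LinearMap.range ((f.smulRight u : E →L[ℝ] E) : E →ₗ[ℝ] E)) = 1 := by
  have hrange : LinearMap.range ((f.smulRight u : E →L[ℝ] E) : E →ₗ[ℝ] E) = span ℝ {u} := by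
    apply le_antisymm
    · rintro _ ⟨x, rfl⟩
      exact Submodule.smul_mem _ _ (Submodule.mem_span_singleton_self u)
    · rw [Submodule.span_singleton_le_iff_mem]
      obtain ⟨x, hx⟩ := DFunLike.ne_iff.mp hf
      refine ⟨(f x)⁻¹ • x, ?_⟩
      simp only [ContinuousLinearMap.coe_coe, ContinuousLinearMap.smulRight_apply, _root_.map_smul, smul_eq_mul,
        smul_smul]
      rw [inv_mul_cancel₀ (by simpa using hx), one_smul]
  rw [hrange]
  exact finrank_span_singleton hu

lemma smulRight_ne_zero (f : E →L[ℝ] ℝ) (u : E) (hf : f ≠ 0) (hu : u ≠ 0) :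
    (f.smulRight u : E →L[ℝ] E) ≠ 0 := by
  obtain ⟨x, hx⟩ := DFunLike.ne_iff.mp hf
  intro h
  have : (f.smulRight u : E →L[ℝ] E) x = 0 := by rw [h]; rfl
  simp only [ContinuousLinearMap.smulRight_apply] at this
  exact hu (by
    have := smul_eq_zero.mp this
    rcases this with h' | h'
    · exact absurd h' (by simpa using hx)
    · exact h')


end schottkyAux2

section schottkyAux3
open Module Submodule

variable {V : Type*} [AddCommGroup V] [Module ℝ V] [FiniteDimensional ℝ V]

lemma gp_rank {d N : ℕ} (v : ℕ → V)
    (hgp : ∀ i < N, ∀ s : Finset ℕ, (∀ j ∈ s, j < i) → s.card ≤ d - 1 →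
      v i ∉ span ℝ (v '' s)) :
    ∀ t : Finset ℕ, (∀ j ∈ t, j < N) → t.card ≤ d →
      t.card ≤ finrank ℝ (span ℝ (v '' t)) := by
  classical
  intro t
  induction t using Finset.strongInduction with
  | _ t ih =>
    intro htN htd
    rcases t.eq_empty_or_nonempty with rfl | hne
    · simp
    · set i := t.max' hne with hi
      have hit : i ∈ t := t.max'_mem hne
      set t' := t.erase i with ht'
      have ht'sub : t' ⊂ t := Finset.erase_ssubset hit
      have hcard : t'.card + 1 = t.card := by
        rw [ht', Finset.card_erase_of_mem hit]
        have : 1 ≤ t.card := Finset.card_pos.mpr hne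
        omega
      have hlt : ∀ j ∈ t', j < i := fun j hj => by
        have h1 : j ≠ i := Finset.ne_of_mem_erase hj
        have h2 : j ≤ i := t.le_max' j (Finset.mem_of_mem_erase hj)
        omega
      have hnotmem : v i ∉ span ℝ (v '' t') := by
        refine hgp i (htN i hit) t' hlt ?_
        omega
      have ihres : t'.card ≤ finrank ℝ (span ℝ (v '' t')) := by
        refine ih t' ht'sub (fun j hj => htN j (Finset.mem_of_mem_erase hj)) ?_
        omega
      have hins : (t : Set ℕ) = insert i (t' : Set ℕ) := by
        rw [ht', Finset.coe_erase]
        rw [Set.insert_diff_singleton, Set.insert_eq_self.mpr (by exact_mod_cast hit)]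
      have hspan : span ℝ (v '' t) = span ℝ (insert (v i) (v '' t')) := by
        rw [hins, Set.image_insert_eq]
      have hltspan : span ℝ (v '' t') < span ℝ (v '' t) := by
        rw [hspan, Submodule.span_insert]
        refine lt_of_le_of_ne le_sup_right (fun he => hnotmem ?_)
        rw [he]
        exact Submodule.mem_sup_left (Submodule.mem_span_singleton_self (v i))
      have := Submodule.finrank_lt_finrank_of_lt hltspan
      omega

lemma gp_card {d N : ℕ} (hd1 : 1 ≤ d) (hdV : finrank ℝ V = d) (v : ℕ → V)
    (hgp : ∀ i < N, ∀ s : Finset ℕ, (∀ j ∈ s, j < i) → s.card ≤ d - 1 →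
      v i ∉ span ℝ (v '' s))
    (W : Submodule ℝ V) (hW : W ≠ ⊤) :
    (Finset.univ.filter (fun k : Fin N => v ↑k ∈ W)).card ≤ d - 1 := by
  classical
  set B := ((Finset.range N).filter (fun i => v i ∈ W)) with hB
  have key : B.card ≤ d - 1 := by
    by_contra hc
    push_neg at hc
    have hcd : d ≤ B.card := by omega
    obtain ⟨t, htB, htcard⟩ := Finset.exists_subset_card_eq hcd
    have htN : ∀ j ∈ t, j < N := fun j hj => by
      have := htB hj; rw [hB, Finset.mem_filter, Finset.mem_range] at this; exact this.1
    have h1 : t.card ≤ finrank ℝ (span ℝ (v '' t)) :=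
      gp_rank v hgp t htN (le_of_eq htcard)
    have h2 : span ℝ (v '' t) ≤ W := by
      rw [Submodule.span_le]
      rintro _ ⟨j, hj, rfl⟩
      have := htB (by exact_mod_cast hj)
      rw [hB, Finset.mem_filter] at this; exact this.2
    have h3 : finrank ℝ (span ℝ (v '' t)) ≤ finrank ℝ W := Submodule.finrank_mono h2
    have h4 : finrank ℝ W < finrank ℝ V := Submodule.finrank_lt hW
    omega
  refine le_trans ?_ key
  refine Finset.card_le_card_of_injOn (fun k => (k : ℕ)) ?_ ?_
  · intro k hk
    rw [Finset.mem_coe, Finset.mem_filter] at hk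
    rw [Finset.mem_coe, hB, Finset.mem_filter]
    exact ⟨Finset.mem_range.mpr k.2, hk.2⟩
  · intro a _ b _ h
    exact Fin.ext h


lemma exists_eps {X : Type*} [NormedAddCommGroup X] [NormedSpace ℝ X] [FiniteDimensional ℝ X]
    [Nontrivial X] {N m : ℕ} (hm : m ≤ N) (hm1 : 1 ≤ m)
    (c : Fin N → X → ℝ) (hc : ∀ k, Continuous (c k))
    (hhom : ∀ (k) (t : ℝ) (h : X), 0 ≤ t → c k (t • h) = t * c k h)
    (hpos : ∀ h : X, h ≠ 0 → ∃ s : Finset (Fin N), m ≤ s.card ∧ ∀ k ∈ s, 0 < c k h) :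
    ∃ ε : ℝ, 0 < ε ∧ ∀ h : X, h ≠ 0 →
      ∃ s : Finset (Fin N), m ≤ s.card ∧ ∀ k ∈ s, ε * ‖h‖ ≤ c k h := by
  classical
  set 𝒮 : Finset (Finset (Fin N)) := Finset.univ.filter (fun s => s.card = m) with h𝒮
  have h𝒮ne : 𝒮.Nonempty := by
    obtain ⟨t, -, htc⟩ := Finset.exists_subset_card_eq (show m ≤ (Finset.univ : Finset (Fin N)).card by simpa using hm)
    exact ⟨t, by simp [h𝒮, htc]⟩
  have hsne : ∀ s ∈ 𝒮, s.Nonempty := by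
    intro s hs
    rw [h𝒮, Finset.mem_filter] at hs
    rw [← Finset.card_pos]; omega
  set inner' : Finset (Fin N) → X → ℝ :=
    fun s h => if hs : s.Nonempty then s.inf' hs (fun k => c k h) else 0 with hinner
  have hinnercont : ∀ s, Continuous (inner' s) := by
    intro s
    by_cases hs : s.Nonempty
    · simp only [hinner, dif_pos hs]
      exact Continuous.finset_inf'_apply hs (fun k _ => hc k)
    · simp only [hinner, dif_neg hs]
      exact continuous_const
  set Φ : X → ℝ := fun h => 𝒮.sup' h𝒮ne (fun s => inner' s h) with hΦ
  have hΦcont : Continuous Φ := Continuous.finset_sup'_apply h𝒮ne (fun s _ => hinnercont s)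
  -- sphere
  obtain ⟨x₀, hx₀⟩ := exists_ne (0 : X)
  have hx₀' : ‖x₀‖ ≠ 0 := norm_ne_zero_iff.mpr hx₀
  have hsph : (Metric.sphere (0 : X) 1).Nonempty :=
    ⟨‖x₀‖⁻¹ • x₀, by simp [norm_smul, abs_of_nonneg, inv_mul_cancel₀ hx₀']⟩
  obtain ⟨h₀, h₀mem, hmin'⟩ := (isCompact_sphere (0 : X) 1).exists_isMinOn hsph
    hΦcont.continuousOn
  have hmin : ∀ y ∈ Metric.sphere (0 : X) 1, Φ h₀ ≤ Φ y := fun y hy => hmin' hy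
  have h₀norm : ‖h₀‖ = 1 := by simpa using mem_sphere_zero_iff_norm.mp h₀mem
  have h₀ne : h₀ ≠ 0 := by intro h; rw [h] at h₀norm; simp at h₀norm
  set ε := Φ h₀ with hε
  have hεpos : 0 < ε := by
    obtain ⟨s, hscard, hsc⟩ := hpos h₀ h₀ne
    obtain ⟨s', hs's, hs'c⟩ := Finset.exists_subset_card_eq (show m ≤ s.card from hscard)
    have hs'𝒮 : s' ∈ 𝒮 := by simp [h𝒮, hs'c]
    have hs'ne : s'.Nonempty := hsne s' hs'𝒮
    have hle : inner' s' h₀ ≤ ε := by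
      rw [hε, hΦ]
      exact Finset.le_sup' (fun s => inner' s h₀) hs'𝒮
    refine lt_of_lt_of_le ?_ hle
    simp only [hinner]
    rw [dif_pos hs'ne]
    obtain ⟨k, hk, hkeq⟩ := Finset.exists_mem_eq_inf' hs'ne (fun k => c k h₀)
    rw [hkeq]
    exact hsc k (hs's hk)
  refine ⟨ε, hεpos, fun h hh => ?_⟩
  have hnorm : (0:ℝ) < ‖h‖ := norm_pos_iff.mpr hh
  set h' : X := ‖h‖⁻¹ • h with hh'
  have hh'sph : h' ∈ Metric.sphere (0 : X) 1 := by
    simp [hh', norm_smul, abs_of_nonneg (inv_nonneg.mpr hnorm.le), inv_mul_cancel₀ hnorm.ne']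
  have hΦh' : ε ≤ Φ h' := hmin h' hh'sph
  obtain ⟨s, hs𝒮, hseq⟩ := Finset.exists_mem_eq_sup' h𝒮ne (fun s => inner' s h')
  have hscard : s.card = m := by
    rw [h𝒮, Finset.mem_filter] at hs𝒮; exact hs𝒮.2
  have hsnex : s.Nonempty := hsne s hs𝒮
  refine ⟨s, le_of_eq hscard.symm, fun k hk => ?_⟩
  have hεle : ε ≤ inner' s h' := by rw [← hseq]; rw [hΦ] at hΦh'; exact hΦh'
  simp only [hinner] at hεle
  rw [dif_pos hsnex] at hεle
  have hck : ε ≤ c k h' := le_trans hεle (Finset.inf'_le _ hk)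
  have hck' : c k h' = ‖h‖⁻¹ * c k h := hhom k _ h (inv_nonneg.mpr hnorm.le)
  rw [hck'] at hck
  calc ε * ‖h‖ ≤ (‖h‖⁻¹ * c k h) * ‖h‖ := by nlinarith
    _ = c k h := by field_simp


end schottkyAux3

open Module Submodule in
/-- Schottky families of rank-one elements in the boundary of a strongly
irreducible semigroup. -/
theorem statement_12
    {E : Type*} [NormedAddCommGroup E] [InnerProductSpace ℝ E] [FiniteDimensional ℝ E]
    (hdim : 2 ≤ Module.finrank ℝ E)
    (S : Set (E →L[ℝ] E)) (hmul : ∀ a ∈ S, ∀ b ∈ S, a * b ∈ S)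
    (hirr1 : ∀ (N : ℕ) (f : Fin (N + 1) → (E →L[ℝ] ℝ)) (v : E), (∀ i, f i ≠ 0) → v ≠ 0 →
      ∃ γ ∈ S, (∏ i, f i (γ v)) ≠ 0)
    (hirr2 : ∀ (N : ℕ) (f : E →L[ℝ] ℝ) (v : Fin (N + 1) → E), f ≠ 0 → (∀ j, v j ≠ 0) →
      ∃ γ ∈ S, (∏ j, f (γ (v j))) ≠ 0)
    (hrk1 : ∃ π ∈ closure {h : E →L[ℝ] E | ∃ c : ℝ, ∃ γ ∈ S, h = c • γ},
      π ≠ (0 : E →L[ℝ] E) ∧ Module.finrank ℝ (LinearMap.range (π : E →ₗ[ℝ] E)) = 1) :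
    ∀ ρ : ℝ, 0 < ρ → ρ ≤ 1 →
      ∃ N : ℕ, 1 ≤ N ∧ ∃ ε : ℝ, 0 < ε ∧ ε ≤ 1 ∧
        ∃ π : Fin N → (E →L[ℝ] E),
          (∀ k, π k ∈ closure {h : E →L[ℝ] E | ∃ c : ℝ, ∃ γ ∈ S, h = c • γ} ∧
            π k ≠ 0 ∧ Module.finrank ℝ (LinearMap.range (π k : E →ₗ[ℝ] E)) = 1) ∧
          ∀ h : E →L[ℝ] E, h ≠ 0 →
            (1 - ρ) * N ≤ ({k : Fin N | ε * (‖π k‖ * ‖h‖) ≤ ‖π k * h‖}.ncard : ℝ) ∧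
            (1 - ρ) * N ≤ ({k : Fin N | ε * (‖h‖ * ‖π k‖) ≤ ‖h * π k‖}.ncard : ℝ) := by
  intro ρ hρ0 hρ1
  classical
  set d := Module.finrank ℝ E with hdE
  have hd1 : 1 ≤ d := by omega
  -- extract a rank-one element of T
  obtain ⟨π₀, hπ₀T, hπ₀ne, hπ₀rank⟩ := hrk1
  have hrange_ne_bot : LinearMap.range (π₀ : E →ₗ[ℝ] E) ≠ ⊥ := by
    intro h
    rw [h] at hπ₀rank
    simp [finrank_bot] at hπ₀rank
  obtain ⟨u₀, hu₀mem, hu₀⟩ := Submodule.exists_mem_ne_zero_of_ne_bot hrange_ne_bot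
  have hspan_eq : span ℝ {u₀} = LinearMap.range (π₀ : E →ₗ[ℝ] E) := by
    apply Submodule.eq_of_le_of_finrank_le
    · rw [Submodule.span_singleton_le_iff_mem]; exact hu₀mem
    · rw [hπ₀rank, finrank_span_singleton hu₀]
  set f₀ : E →L[ℝ] ℝ := (‖u₀‖ ^ 2)⁻¹ • ((innerSL ℝ u₀).comp π₀) with hf₀def
  have hu₀norm : (‖u₀‖ : ℝ) ^ 2 ≠ 0 := pow_ne_zero _ (norm_ne_zero_iff.mpr hu₀)
  have heq : π₀ = f₀.smulRight u₀ := by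
    ext x
    have hx : π₀ x ∈ span ℝ {u₀} := by rw [hspan_eq]; exact LinearMap.mem_range_self _ x
    obtain ⟨c, hc⟩ := Submodule.mem_span_singleton.mp hx
    have hfx : f₀ x = c := by
      rw [hf₀def]
      simp only [ContinuousLinearMap.smul_apply, ContinuousLinearMap.comp_apply,
        innerSL_apply_apply, smul_eq_mul]
      rw [← hc, inner_smul_right, real_inner_self_eq_norm_sq]
      field_simp
    rw [ContinuousLinearMap.smulRight_apply, hfx, hc]
  have hf₀ : f₀ ≠ 0 := by
    intro h
    apply hπ₀ne
    rw [heq, h]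
    ext x; simp
  -- choose N
  set N := max d (Nat.ceil (((d : ℝ) - 1) / ρ)) with hN
  have hdN : d ≤ N := le_max_left _ _
  have hN1 : 1 ≤ N := le_trans hd1 hdN
  have hρN : (d : ℝ) - 1 ≤ ρ * N := by
    have h2 : (Nat.ceil (((d : ℝ) - 1) / ρ)) ≤ N := le_max_right _ _
    have h2' : ((Nat.ceil (((d : ℝ) - 1) / ρ) : ℕ) : ℝ) ≤ (N : ℝ) := Nat.cast_le.mpr h2
    have h3 := le_trans (Nat.le_ceil (((d : ℝ) - 1) / ρ)) h2'
    rw [div_le_iff₀ hρ0] at h3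
    nlinarith
  set m := N - (d - 1) with hm
  have hm1 : 1 ≤ m := by omega
  have hmN : m ≤ N := by omega
  -- build the two families
  obtain ⟨w, hwmem, hwgp⟩ := build_vecs hdE.symm hd1 S hirr1 u₀ hu₀ N
  obtain ⟨F, hFmem, hFgp⟩ := build_funcs hdE.symm hd1 S hirr2 f₀ hf₀ u₀ hu₀ N
  have hwne : ∀ i < N, w i ≠ 0 := by
    intro i hi h0
    have := hwgp i hi ∅ (by simp) (by simp)
    apply this
    rw [h0]
    simp
  have hFne : ∀ i < N, F i ≠ 0 := by
    intro i hi h0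
    have := hFgp i hi ∅ (by simp) (by simp)
    apply this
    rw [h0]
    simp
  -- normalized rank-one maps
  set π : Fin N → (E →L[ℝ] E) :=
    fun k => ((‖F ↑k‖⁻¹ • F ↑k).smulRight (‖w ↑k‖⁻¹ • w ↑k)) with hπdef
  have hFknorm : ∀ k : Fin N, ‖(‖F ↑k‖⁻¹ • F ↑k : E →L[ℝ] ℝ)‖ = 1 := by
    intro k
    have h := norm_smul (‖F ↑k‖⁻¹) (F ↑k)
    rw [h, Real.norm_eq_abs, abs_of_nonneg (inv_nonneg.mpr (norm_nonneg _))]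
    exact inv_mul_cancel₀ (norm_ne_zero_iff.mpr (hFne ↑k k.isLt))
  have hwknorm : ∀ k : Fin N, ‖(‖w ↑k‖⁻¹ • w ↑k : E)‖ = 1 := by
    intro k
    have h := norm_smul (‖w ↑k‖⁻¹) (w ↑k)
    rw [h, Real.norm_eq_abs, abs_of_nonneg (inv_nonneg.mpr (norm_nonneg _))]
    exact inv_mul_cancel₀ (norm_ne_zero_iff.mpr (hwne ↑k k.isLt))
  have hπnorm : ∀ k, ‖π k‖ = 1 := by
    intro k
    rw [hπdef]
    simp only []
    rw [ContinuousLinearMap.norm_smulRight_apply, hFknorm k, hwknorm k, mul_one]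
  have hFk0 : ∀ k : Fin N, (‖F ↑k‖⁻¹ • F ↑k : E →L[ℝ] ℝ) ≠ 0 := fun k =>
    smul_ne_zero (inv_ne_zero (norm_ne_zero_iff.mpr (hFne ↑k k.isLt))) (hFne ↑k k.isLt)
  have hwk0 : ∀ k : Fin N, (‖w ↑k‖⁻¹ • w ↑k : E) ≠ 0 := fun k =>
    smul_ne_zero (inv_ne_zero (norm_ne_zero_iff.mpr (hwne ↑k k.isLt))) (hwne ↑k k.isLt)
  have hπmem : ∀ k, π k ∈ closure {h : E →L[ℝ] E | ∃ c : ℝ, ∃ γ ∈ S, h = c • γ} := by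
    intro k
    obtain ⟨γ, hγS, hγeq⟩ := hwmem ↑k k.isLt
    obtain ⟨γ', hγ'S, hγ'eq⟩ := hFmem ↑k k.isLt
    have hsand : γ * π₀ * γ' = (f₀.comp γ').smulRight (γ u₀) := by
      ext x
      simp only [ContinuousLinearMap.mul_apply, heq, ContinuousLinearMap.smulRight_apply,
        ContinuousLinearMap.comp_apply, _root_.map_smul]
    have hπeq : π k = (‖F ↑k‖⁻¹ * ‖w ↑k‖⁻¹) • (γ * π₀ * γ') := by
      rw [hπdef]
      simp only []
      rw [hsand, ← hγeq, ← hγ'eq, smulRight_smul_smul]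
    rw [hπeq]
    exact T_smul S _ (T_sandwich S hmul hγS hγ'S hπ₀T)
  have hπne2 : ∀ k, π k ≠ 0 := fun k => smulRight_ne_zero _ _ (hFk0 k) (hwk0 k)
  have hπrank : ∀ k, Module.finrank ℝ (LinearMap.range (π k : E →ₗ[ℝ] E)) = 1 := fun k =>
    range_smulRight _ _ (hFk0 k) (hwk0 k)
  -- dual space dimension
  have hdual : finrank ℝ (E →L[ℝ] ℝ) = d := by
    rw [(LinearMap.toContinuousLinearMap : (E →ₗ[ℝ] ℝ) ≃ₗ[ℝ] (E →L[ℝ] ℝ)).symm.finrank_eq,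
      Module.finrank_linearMap_self]
  haveI : Nontrivial E := by
    rcases eq_or_ne u₀ 0 with h | h
    · exact absurd h hu₀
    · exact ⟨u₀, 0, h⟩
  haveI : Nontrivial (E →L[ℝ] E) := ⟨1, 0, by
    intro h
    have : (1 : E →L[ℝ] E) u₀ = (0 : E →L[ℝ] E) u₀ := by rw [h]
    simpa [hu₀] using this⟩
  -- functions for the compactness argument
  set c1 : Fin N → (E →L[ℝ] E) → ℝ := fun k h => ‖F ↑k‖⁻¹ * ‖(F ↑k).comp h‖ with hc1
  set c2 : Fin N → (E →L[ℝ] E) → ℝ := fun k h => ‖w ↑k‖⁻¹ * ‖h (w ↑k)‖ with hc2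
  have hc1cont : ∀ k, Continuous (c1 k) := by
    intro k
    exact continuous_const.mul (((ContinuousLinearMap.compL ℝ E E ℝ) (F ↑k)).continuous.norm)
  have hc2cont : ∀ k, Continuous (c2 k) := by
    intro k
    exact continuous_const.mul ((ContinuousLinearMap.apply ℝ E (w ↑k)).continuous.norm)
  have hc1hom : ∀ (k) (t : ℝ) (h : E →L[ℝ] E), 0 ≤ t → c1 k (t • h) = t * c1 k h := by
    intro k t h ht
    rw [hc1]
    simp only [ContinuousLinearMap.comp_smul]
    have hns := norm_smul t ((F ↑k).comp h)
    rw [hns, Real.norm_eq_abs, abs_of_nonneg ht]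
    ring
  have hc2hom : ∀ (k) (t : ℝ) (h : E →L[ℝ] E), 0 ≤ t → c2 k (t • h) = t * c2 k h := by
    intro k t h ht
    rw [hc2]
    simp only [ContinuousLinearMap.smul_apply]
    have hns := norm_smul t (h (w ↑k))
    rw [hns, Real.norm_eq_abs, abs_of_nonneg ht]
    ring
  have hcardfact : ∀ (P : Fin N → Prop),
      (Finset.univ.filter (fun k => P k)).card ≤ d - 1 →
      m ≤ (Finset.univ.filter (fun k => ¬ P k)).card := by
    intro P hP
    have hcover : (Finset.univ : Finset (Fin N)) ⊆
        (Finset.univ.filter (fun k => P k)) ∪ (Finset.univ.filter (fun k => ¬ P k)) := by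
      intro k _
      by_cases h : P k <;> simp [h]
    have h1 := Finset.card_le_card hcover
    have h2 := Finset.card_union_le (Finset.univ.filter (fun k => P k))
      (Finset.univ.filter (fun k => ¬ P k))
    rw [Finset.card_univ, Fintype.card_fin] at h1
    omega
  have hc1pos : ∀ h : E →L[ℝ] E, h ≠ 0 →
      ∃ s : Finset (Fin N), m ≤ s.card ∧ ∀ k ∈ s, 0 < c1 k h := by
    intro h hh
    obtain ⟨x, hx⟩ := ContinuousLinearMap.exists_ne_zero hh
    set W : Submodule ℝ (E →L[ℝ] ℝ) :=
      LinearMap.ker (ContinuousLinearMap.apply ℝ ℝ (h x) : (E →L[ℝ] ℝ) →ₗ[ℝ] ℝ) with hW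
    have hWne : W ≠ ⊤ := by
      intro htop
      have hmem : innerSL ℝ (h x) ∈ W := htop ▸ Submodule.mem_top
      rw [hW, LinearMap.mem_ker] at hmem
      simp only [ContinuousLinearMap.coe_coe, ContinuousLinearMap.apply_apply, innerSL_apply_apply,
        real_inner_self_eq_norm_sq] at hmem
      exact hx (by simpa using hmem)
    have hbad := gp_card hd1 hdual F hFgp W hWne
    refine ⟨Finset.univ.filter (fun k : Fin N => ¬ (F ↑k ∈ W)), hcardfact _ hbad, ?_⟩
    intro k hk
    rw [Finset.mem_filter] at hk
    have hFk : F ↑k (h x) ≠ 0 := by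
      intro h0
      exact hk.2 (by rw [hW, LinearMap.mem_ker]; simpa using h0)
    have hcomp : (F ↑k).comp h ≠ 0 := by
      intro h0
      apply hFk
      have hz : ((F ↑k).comp h) x = 0 := by rw [h0]; rfl
      rw [ContinuousLinearMap.comp_apply] at hz
      exact hz
    have h1 : 0 < ‖F ↑k‖⁻¹ := inv_pos.mpr (norm_pos_iff.mpr (hFne ↑k k.isLt))
    have h2 : 0 < ‖(F ↑k).comp h‖ := norm_pos_iff.mpr hcomp
    exact mul_pos h1 h2
  have hc2pos : ∀ h : E →L[ℝ] E, h ≠ 0 →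
      ∃ s : Finset (Fin N), m ≤ s.card ∧ ∀ k ∈ s, 0 < c2 k h := by
    intro h hh
    set W : Submodule ℝ E := LinearMap.ker (h : E →ₗ[ℝ] E) with hW
    have hWne : W ≠ ⊤ := by
      intro htop
      apply hh
      ext x
      have : x ∈ W := htop ▸ Submodule.mem_top
      rw [hW] at this
      simpa using this
    have hbad := gp_card hd1 hdE.symm w hwgp W hWne
    refine ⟨Finset.univ.filter (fun k : Fin N => ¬ (w ↑k ∈ W)), hcardfact _ hbad, ?_⟩
    intro k hk
    rw [Finset.mem_filter] at hk
    have hwk : h (w ↑k) ≠ 0 := by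
      intro h0
      exact hk.2 (by rw [hW]; simpa using h0)
    have h1 : 0 < ‖w ↑k‖⁻¹ := inv_pos.mpr (norm_pos_iff.mpr (hwne ↑k k.isLt))
    have h2 : 0 < ‖h (w ↑k)‖ := norm_pos_iff.mpr hwk
    exact mul_pos h1 h2
  obtain ⟨ε₁, hε₁pos, hε₁⟩ := exists_eps hmN hm1 c1 hc1cont hc1hom hc1pos
  obtain ⟨ε₂, hε₂pos, hε₂⟩ := exists_eps hmN hm1 c2 hc2cont hc2hom hc2pos
  set ε := min 1 (min ε₁ ε₂) with hε
  have hεpos : 0 < ε := lt_min one_pos (lt_min hε₁pos hε₂pos)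
  have hεle1 : ε ≤ 1 := min_le_left _ _
  have hεleε₁ : ε ≤ ε₁ := le_trans (min_le_right _ _) (min_le_left _ _)
  have hεleε₂ : ε ≤ ε₂ := le_trans (min_le_right _ _) (min_le_right _ _)
  -- norm computations
  have hnorm1 : ∀ (k : Fin N) (h : E →L[ℝ] E), ‖π k * h‖ = c1 k h := by
    intro k h
    rw [hπdef]
    simp only []
    rw [smulRight_mul_eq, ContinuousLinearMap.norm_smulRight_apply, hwknorm k, mul_one,
      ContinuousLinearMap.smul_comp, norm_smul, Real.norm_eq_abs,
      abs_of_nonneg (inv_nonneg.mpr (norm_nonneg _)), hc1]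
  have hnorm2 : ∀ (k : Fin N) (h : E →L[ℝ] E), ‖h * π k‖ = c2 k h := by
    intro k h
    rw [hπdef]
    simp only []
    rw [mul_smulRight_eq, ContinuousLinearMap.norm_smulRight_apply, hFknorm k, one_mul,
      _root_.map_smul, norm_smul, Real.norm_eq_abs,
      abs_of_nonneg (inv_nonneg.mpr (norm_nonneg _)), hc2]
  -- count bound
  have hcount : (1 - ρ) * N ≤ (m : ℝ) := by
    have hmcast : (m : ℝ) = (N : ℝ) - ((d : ℝ) - 1) := by
      rw [hm]
      have : (d : ℝ) - 1 = ((d - 1 : ℕ) : ℝ) := by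
        push_cast [Nat.cast_sub hd1]; ring
      rw [this, Nat.cast_sub (by omega)]
    rw [hmcast]
    nlinarith
  refine ⟨N, hN1, ε, hεpos, hεle1, π, fun k => ⟨hπmem k, hπne2 k, hπrank k⟩, ?_⟩
  intro h hh
  have hhn : (0 : ℝ) ≤ ‖h‖ := norm_nonneg _
  constructor
  · obtain ⟨s, hscard, hsc⟩ := hε₁ h hh
    have hsub : (↑s : Set (Fin N)) ⊆ {k : Fin N | ε * (‖π k‖ * ‖h‖) ≤ ‖π k * h‖} := by
      intro k hk
      simp only [Set.mem_setOf_eq]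
      rw [hnorm1 k h, hπnorm k, one_mul]
      calc ε * ‖h‖ ≤ ε₁ * ‖h‖ := by nlinarith
        _ ≤ c1 k h := hsc k (by exact_mod_cast hk)
    calc (1 - ρ) * N ≤ (m : ℝ) := hcount
      _ ≤ (s.card : ℝ) := by exact_mod_cast hscard
      _ ≤ _ := by
          rw [← Set.ncard_coe_finset s]
          exact_mod_cast Set.ncard_le_ncard hsub (Set.toFinite _)
  · obtain ⟨s, hscard, hsc⟩ := hε₂ h hh
    have hsub : (↑s : Set (Fin N)) ⊆ {k : Fin N | ε * (‖h‖ * ‖π k‖) ≤ ‖h * π k‖} := by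
      intro k hk
      simp only [Set.mem_setOf_eq]
      rw [hnorm2 k h, hπnorm k, mul_one]
      calc ε * ‖h‖ ≤ ε₂ * ‖h‖ := by nlinarith
        _ ≤ c2 k h := hsc k (by exact_mod_cast hk)
    calc (1 - ρ) * N ≤ (m : ℝ) := hcount
      _ ≤ (s.card : ℝ) := by exact_mod_cast hscard
      _ ≤ _ := by
          rw [← Set.ncard_coe_finset s]
          exact_mod_cast Set.ncard_le_ncard hsub (Set.toFinite _)
end

section
/- Let E₁, E₂, E₃ be finite-dimensional real inner product spaces, let h : E₁ → E₂ and g : E₂ → E₃ be nonzero linear maps, and let ε ∈ (0,1]. Assume ‖g∘h‖ ≥ ε·‖g‖·‖h‖. Then: (i) sqz(g∘h) ≥ sqz(g) + sqz(h) − 2·log(1/ε) (an inequality in [0,+∞]); (ii) for every nonzero u ∈ U¹(g) and every nonzero u′ ∈ U¹(g∘h), d([u],[u′]) ≤ (1/ε)·exp(−sqz(g)) (where exp(−∞) := 0). -/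
open MeasureTheory Filter Topology
open scoped ENNReal NNReal

attribute [local instance] Classical.propDecidable

section AuxLemmas
open scoped RealInnerProductSpace
variable {E : Type*} [NormedAddCommGroup E] [InnerProductSpace ℝ E]
variable {F : Type*} [NormedAddCommGroup F] [InnerProductSpace ℝ F]

/-- Gram determinant of a pair. -/
noncomputable def gram2 (x y : E) : ℝ := ‖x‖^2 * ‖y‖^2 - ⟪x,y⟫^2

lemma gram2_nonneg (x y : E) : 0 ≤ gram2 x y := by
  have h := abs_real_inner_le_norm x y
  have h2 : ⟪x,y⟫^2 ≤ (‖x‖*‖y‖)^2 := by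
    rw [← sq_abs]
    exact pow_le_pow_left₀ (abs_nonneg _) h 2
  simp only [gram2]; nlinarith

lemma gram2_symm (x y : E) : gram2 x y = gram2 y x := by
  simp only [gram2, real_inner_comm]; ring

lemma gram2_le (x y : E) : gram2 x y ≤ ‖x‖^2 * ‖y‖^2 := by
  simp only [gram2]; nlinarith [sq_nonneg ⟪x,y⟫]

lemma gram2_shift (x y : E) (t : ℝ) : gram2 x (y - t • x) = gram2 x y := by
  simp only [gram2, ← real_inner_self_eq_norm_sq, inner_sub_left, inner_sub_right,
    inner_smul_left, inner_smul_right, RCLike.conj_to_real, real_inner_comm x y]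
  ring

lemma gram2_eq (x y : E) (hx : x ≠ 0) :
    gram2 x y = ‖x‖^2 * ‖y - (⟪x,y⟫/‖x‖^2) • x‖^2 := by
  have hxx : ⟪x,x⟫ ≠ 0 := by
    rw [real_inner_self_eq_norm_sq]
    exact pow_ne_zero 2 (norm_ne_zero_iff.mpr hx)
  simp only [gram2, ← real_inner_self_eq_norm_sq, inner_sub_left, inner_sub_right,
    inner_smul_left, inner_smul_right, RCLike.conj_to_real, real_inner_comm x y]
  field_simp
  ring

lemma plane_unit_nonempty (P : Submodule ℝ E) (hP : Module.finrank ℝ P = 2) :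
    Nonempty {x : E // x ∈ P ∧ ‖x‖ = 1} := by
  have hr : 0 < Module.rank ℝ P := by
    rcases eq_or_ne (Module.rank ℝ P) 0 with h|h
    · exfalso; rw [Module.finrank, h] at hP; simp at hP
    · exact pos_iff_ne_zero.mpr h
  obtain ⟨x, hxP, hx0'⟩ := exists_mem_ne_zero_of_rank_pos hr
  refine ⟨⟨‖x‖⁻¹ • x, P.smul_mem _ hxP, ?_⟩⟩
  rw [norm_smul]
  simp [norm_ne_zero_iff.mpr hx0']

lemma inf_bddBelow (f : E →L[ℝ] F) (P : Submodule ℝ E) :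
    BddBelow (Set.range fun x : {x : E // x ∈ P ∧ ‖x‖ = 1} => ‖f x.1‖) := by
  exact ⟨0, by rintro _ ⟨x, rfl⟩; positivity⟩

lemma plane_inf_le_norm (f : E →L[ℝ] F)
    (P : {P : Submodule ℝ E // Module.finrank ℝ P = 2}) :
    (⨅ x : {x : E // x ∈ P.1 ∧ ‖x‖ = 1}, ‖f x.1‖) ≤ ‖f‖ := by
  have := plane_unit_nonempty P.1 P.2
  obtain ⟨x⟩ := this
  refine ciInf_le_of_le (inf_bddBelow f P.1) x ?_
  calc ‖f x.1‖ ≤ ‖f‖ * ‖x.1‖ := f.le_opNorm x.1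
  _ = ‖f‖ := by rw [x.2.2, mul_one]

lemma secondSing_nonneg (f : E →L[ℝ] F) : 0 ≤ secondSing f := by
  refine Real.iSup_nonneg fun P => ?_
  exact Real.iInf_nonneg fun x => norm_nonneg _

lemma secondSing_le_norm (f : E →L[ℝ] F) : secondSing f ≤ ‖f‖ :=
  Real.iSup_le (fun P => plane_inf_le_norm f P) (norm_nonneg f)

lemma exists_unit_ker (P : Submodule ℝ E) (hP : Module.finrank ℝ P = 2)
    (φ : E →ₗ[ℝ] ℝ) : ∃ y : E, y ∈ P ∧ ‖y‖ = 1 ∧ φ y = 0 := by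
  have hni : ¬ Function.Injective (φ.comp P.subtype) := by
    intro hinj
    have := LinearMap.finrank_le_finrank_of_injective hinj
    rw [hP, Module.finrank_self] at this
    omega
  rw [Function.not_injective_iff] at hni
  obtain ⟨a, b, hab, hne⟩ := hni
  set y : E := (a : E) - (b : E) with hy
  have hyP : y ∈ P := P.sub_mem a.2 b.2
  have hy0 : y ≠ 0 := by
    simp only [hy, sub_ne_zero]
    exact fun h => hne (Subtype.ext h)
  have hφy : φ y = 0 := by
    have : φ a - φ b = 0 := by
      simpa [LinearMap.comp_apply] using sub_eq_zero_of_eq hab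
    simpa [hy, _root_.map_sub] using this
  refine ⟨‖y‖⁻¹ • y, P.smul_mem _ hyP, ?_, by simp [hφy]⟩
  rw [norm_smul]; simp [norm_ne_zero_iff.mpr hy0]

lemma secondSing_le_of_perp (f : E →L[ℝ] F) (φ : E →ₗ[ℝ] ℝ) (C : ℝ) (hC : 0 ≤ C)
    (hb : ∀ y, φ y = 0 → ‖f y‖ ≤ C * ‖y‖) : secondSing f ≤ C := by
  refine Real.iSup_le (fun P => ?_) hC
  obtain ⟨y, hyP, hy1, hφ⟩ := exists_unit_ker P.1 P.2 φ
  refine ciInf_le_of_le (inf_bddBelow f P.1) ⟨y, hyP, hy1⟩ ?_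
  calc ‖f y‖ ≤ C * ‖y‖ := hb y hφ
  _ = C := by rw [hy1, mul_one]

lemma exists_top [FiniteDimensional ℝ E] (f : E →L[ℝ] F) (hf : f ≠ 0) :
    ∃ v : E, ‖v‖ = 1 ∧ ‖f v‖ = ‖f‖ := by
  obtain ⟨x, hx⟩ : ∃ x : E, f x ≠ 0 := by
    by_contra hc; push_neg at hc
    exact hf (ContinuousLinearMap.ext fun x => by simp [hc])
  have hx0 : x ≠ 0 := fun h => hx (by simp [h])
  have hne : (Metric.sphere (0:E) 1).Nonempty :=
    ⟨‖x‖⁻¹ • x, by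
      simp [mem_sphere_zero_iff_norm, norm_smul, norm_ne_zero_iff.mpr hx0]⟩
  have hcont : Continuous fun y : E => ‖f y‖ := f.continuous.norm
  obtain ⟨v, hv, hmax⟩ := (isCompact_sphere (0:E) 1).exists_isMaxOn hne hcont.continuousOn
  have hv1 : ‖v‖ = 1 := by simpa [mem_sphere_zero_iff_norm] using hv
  refine ⟨v, hv1, le_antisymm (by simpa [hv1] using f.le_opNorm v) ?_⟩
  refine f.opNorm_le_bound (norm_nonneg _) fun y => ?_
  rcases eq_or_ne y 0 with rfl|hy0
  · simp
  · have hmem : (‖y‖⁻¹ • y) ∈ Metric.sphere (0:E) 1 := by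
      simp [mem_sphere_zero_iff_norm, norm_smul, norm_ne_zero_iff.mpr hy0]
    have h1 : ‖f (‖y‖⁻¹ • y)‖ ≤ ‖f v‖ := hmax hmem
    rw [_root_.map_smul, norm_smul] at h1
    simp only [norm_inv, norm_norm] at h1
    have hy : 0 < ‖y‖ := norm_pos_iff.mpr hy0
    calc ‖f y‖ = ‖y‖ * (‖y‖⁻¹ * ‖f y‖) := by field_simp
    _ ≤ ‖y‖ * ‖f v‖ := by nlinarith
    _ = ‖f v‖ * ‖y‖ := mul_comm _ _

lemma top_orth (f : E →L[ℝ] F) {v : E} (hv : ‖v‖ = 1) (hfv : ‖f v‖ = ‖f‖)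
    {w : E} (hw : ⟪v,w⟫ = 0) : ⟪f v, f w⟫ = 0 := by
  set c := ⟪f v, f w⟫ with hc
  set K := ‖f‖^2*‖w‖^2 - ‖f w‖^2 with hKdef
  have hK : 0 ≤ K := by
    have := f.le_opNorm w
    nlinarith [norm_nonneg (f w), norm_nonneg w, f.opNorm_nonneg]
  have key : ∀ t : ℝ, 2*t*c ≤ t^2*K := by
    intro t
    have h1 : ‖f (v + t • w)‖^2 ≤ ‖f‖^2 * ‖v + t • w‖^2 := by
      have := f.le_opNorm (v + t • w)
      nlinarith [norm_nonneg (f (v + t • w)), norm_nonneg (v + t • w), f.opNorm_nonneg]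
    have h2 : ‖v + t•w‖^2 = 1 + t^2*‖w‖^2 := by
      rw [← real_inner_self_eq_norm_sq]
      simp only [inner_add_left, inner_add_right, inner_smul_left, inner_smul_right,
        RCLike.conj_to_real]
      have hw' : ⟪w,v⟫ = (0:ℝ) := by rw [real_inner_comm]; exact hw
      rw [real_inner_self_eq_norm_sq, real_inner_self_eq_norm_sq, hv, hw', hw]
      ring
    have h3 : ‖f (v + t•w)‖^2 = ‖f v‖^2 + 2*t*c + t^2*‖f w‖^2 := by
      have hfe : f (v + t•w) = f v + t • f w := by simp
      rw [hfe, ← real_inner_self_eq_norm_sq]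
      simp only [inner_add_left, inner_add_right, inner_smul_left, inner_smul_right,
        RCLike.conj_to_real]
      have hcc : ⟪f w, f v⟫ = c := by rw [hc]; exact real_inner_comm _ _
      rw [real_inner_self_eq_norm_sq, real_inner_self_eq_norm_sq, hcc, ← hc]
      ring
    have h4 : ‖f v‖^2 = ‖f‖^2 := by rw [hfv]
    nlinarith
  by_contra hcne
  have hc2 : 0 < c^2 := by positivity
  have hK1 : 0 < K + 1 := by linarith
  have h := key (c/(K+1))
  have h' : 2*(c/(K+1))*c*(K+1)^2 ≤ (c/(K+1))^2*K*(K+1)^2 := by nlinarith [sq_nonneg (K+1)]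
  have he1 : 2*(c/(K+1))*c*(K+1)^2 = 2*c^2*(K+1) := by field_simp
  have he2 : (c/(K+1))^2*K*(K+1)^2 = c^2*K := by field_simp
  rw [he1, he2] at h'
  nlinarith [mul_nonneg hc2.le hK]

lemma sup_bddAbove (f : E →L[ℝ] F) :
    BddAbove (Set.range fun P : {P : Submodule ℝ E // Module.finrank ℝ P = 2} =>
      ⨅ x : {x : E // x ∈ P.1 ∧ ‖x‖ = 1}, ‖f x.1‖) :=
  ⟨‖f‖, by rintro _ ⟨P, rfl⟩; exact plane_inf_le_norm f P⟩

lemma top_perp_bound (f : E →L[ℝ] F) {v : E} (hv : ‖v‖ = 1) (hfv : ‖f v‖ = ‖f‖)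
    {w : E} (hw : ⟪v,w⟫ = 0) : ‖f w‖ ≤ secondSing f * ‖w‖ := by
  rcases eq_or_ne w 0 with rfl|hw0
  · simp
  set u := ‖w‖⁻¹ • w with hudef
  have hwn : ‖w‖ ≠ 0 := norm_ne_zero_iff.mpr hw0
  have hu1 : ‖u‖ = 1 := by rw [hudef, norm_smul]; simp [hwn]
  have huv : ⟪v,u⟫ = 0 := by
    rw [hudef, real_inner_smul_right, hw, mul_zero]
  suffices h : ‖f u‖ ≤ secondSing f by
    have hfw : ‖f w‖ = ‖w‖ * ‖f u‖ := by
      rw [hudef, _root_.map_smul, norm_smul, norm_inv, norm_norm]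
      field_simp
    rw [hfw, mul_comm]
    exact mul_le_mul_of_nonneg_right h (norm_nonneg w)
  have hvu : ∀ a : ℝ, a • u ≠ v := by
    intro a hav
    have h1 : ⟪v, a • u⟫ = (0:ℝ) := by rw [real_inner_smul_right, huv, mul_zero]
    rw [hav, real_inner_self_eq_norm_sq, hv] at h1; norm_num at h1
  have hli : LinearIndependent ℝ ![v, u] := by
    rw [linearIndependent_fin2]
    constructor
    · simpa using fun h => by rw [h] at hu1; simp at hu1
    · simpa using hvu
  have hrange : Set.range ![v, u] = ({v, u} : Set E) := by
    ext z; simp [Fin.exists_fin_two]; tauto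
  set P : Submodule ℝ E := Submodule.span ℝ ({v, u} : Set E) with hPdef
  have hP : Module.finrank ℝ P = 2 := by
    rw [hPdef, ← hrange, finrank_span_eq_card hli]
    simp
  have horth : ⟪f v, f u⟫ = 0 := top_orth f hv hfv huv
  have hfu : ‖f u‖ ≤ ‖f‖ := by
    calc ‖f u‖ ≤ ‖f‖ * ‖u‖ := f.le_opNorm u
    _ = ‖f‖ := by rw [hu1, mul_one]
  haveI := plane_unit_nonempty P hP
  have hlow : ‖f u‖ ≤ ⨅ x : {x : E // x ∈ P ∧ ‖x‖ = 1}, ‖f x.1‖ := by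
    refine le_ciInf fun x => ?_
    obtain ⟨a, b, hx⟩ := Submodule.mem_span_pair.mp x.2.1
    have hxu : ⟪u,v⟫ = (0:ℝ) := by rw [real_inner_comm]; exact huv
    have hnx : a^2 + b^2 = (1:ℝ) := by
      have := x.2.2
      have h1 : ‖a • v + b • u‖^2 = a^2 + b^2 := by
        rw [← real_inner_self_eq_norm_sq]
        simp only [inner_add_left, inner_add_right, inner_smul_left, inner_smul_right,
          RCLike.conj_to_real]
        rw [real_inner_self_eq_norm_sq, real_inner_self_eq_norm_sq, hv, hu1, huv, hxu]
        ring
      rw [hx, this] at h1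
      simpa using h1.symm
    have horth' : ⟪f u, f v⟫ = (0:ℝ) := by rw [real_inner_comm]; exact horth
    have hfx : ‖f x.1‖^2 = a^2*‖f v‖^2 + b^2*‖f u‖^2 := by
      rw [← hx]
      have : f (a • v + b • u) = a • f v + b • f u := by simp
      rw [this, ← real_inner_self_eq_norm_sq]
      simp only [inner_add_left, inner_add_right, inner_smul_left, inner_smul_right,
        RCLike.conj_to_real]
      rw [real_inner_self_eq_norm_sq, real_inner_self_eq_norm_sq, horth, horth']
      ring
    have hsq : ‖f u‖^2 ≤ ‖f x.1‖^2 := by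
      rw [hfx]
      have : ‖f u‖^2 ≤ ‖f v‖^2 := by rw [hfv]; nlinarith [norm_nonneg (f u), f.opNorm_nonneg]
      nlinarith [sq_nonneg a, sq_nonneg b]
    nlinarith [norm_nonneg (f u), norm_nonneg (f x.1)]
  calc ‖f u‖ ≤ _ := hlow
  _ ≤ secondSing f := le_ciSup_of_le (sup_bddAbove f) ⟨P, hP⟩ le_rfl

lemma sq_mul_le_sq_mul {a b c d : ℝ} (ha : 0 ≤ a) (hb : 0 ≤ b) (h1 : a ≤ c) (h2 : b ≤ d) :
    a^2*b^2 ≤ c^2*d^2 := by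
  have h3 : a*b ≤ c*d := mul_le_mul h1 h2 hb (ha.trans h1)
  nlinarith [mul_nonneg ha hb]

lemma gram2_map_le_aux (g : E →L[ℝ] F) {v : E} (hv : ‖v‖ = 1) (hfv : ‖g v‖ = ‖g‖)
    (p q : E) (hp : ⟪v,p⟫ ≠ 0) :
    gram2 (g p) (g q) ≤ ‖g‖^2 * (secondSing g)^2 * gram2 p q := by
  set s := ⟪v,q⟫/⟪v,p⟫ with hs
  set q' := q - s • p with hq'
  have hq'v : ⟪v,q'⟫ = 0 := by
    rw [hq', inner_sub_right, real_inner_smul_right, hs]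
    field_simp
    ring
  have hgq' : g q' = g q - s • g p := by simp [hq']
  have e1 : gram2 (g p) (g q) = gram2 (g q') (g p) := by
    rw [← gram2_shift (g p) (g q) s, ← hgq', gram2_symm]
  have e2 : gram2 p q = gram2 q' p := by
    rw [← gram2_shift p q s, ← hq', gram2_symm]
  rw [e1, e2]
  rcases eq_or_ne q' 0 with h0|hq'0
  · rw [h0]
    simp only [_root_.map_zero]
    have : gram2 (0:F) (g p) = 0 := by simp [gram2]
    rw [this]
    exact mul_nonneg (by positivity) (gram2_nonneg _ _)
  · set t := ⟪q',p⟫/‖q'‖^2 with ht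
    have e3 : gram2 (g q') (g p) = gram2 (g q') (g p - t • g q') := (gram2_shift _ _ t).symm
    have hgpt : g p - t • g q' = g (p - t • q') := by simp
    have hb1 : ‖g q'‖ ≤ secondSing g * ‖q'‖ := top_perp_bound g hv hfv hq'v
    have hb2 : ‖g (p - t • q')‖ ≤ ‖g‖ * ‖p - t • q'‖ := g.le_opNorm _
    have e4 : gram2 q' p = ‖q'‖^2 * ‖p - t • q'‖^2 := gram2_eq q' p hq'0
    calc gram2 (g q') (g p) = gram2 (g q') (g (p - t • q')) := by rw [e3, hgpt]
    _ ≤ ‖g q'‖^2 * ‖g (p - t • q')‖^2 := gram2_le _ _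
    _ ≤ (secondSing g * ‖q'‖)^2 * (‖g‖ * ‖p - t • q'‖)^2 := by
        exact sq_mul_le_sq_mul (norm_nonneg _) (norm_nonneg _) hb1 hb2
    _ = ‖g‖^2 * (secondSing g)^2 * (‖q'‖^2 * ‖p - t • q'‖^2) := by ring
    _ = ‖g‖^2 * (secondSing g)^2 * gram2 q' p := by rw [e4]

lemma gram2_map_le (g : E →L[ℝ] F) {v : E} (hv : ‖v‖ = 1) (hfv : ‖g v‖ = ‖g‖)
    (p q : E) :
    gram2 (g p) (g q) ≤ ‖g‖^2 * (secondSing g)^2 * gram2 p q := by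
  by_cases hp : ⟪v,p⟫ = 0
  · by_cases hq : ⟪v,q⟫ = 0
    · rcases eq_or_ne p 0 with rfl|hp0
      · have : gram2 (g 0) (g q) = 0 := by simp [gram2]
        rw [this]
        exact mul_nonneg (by positivity) (gram2_nonneg _ _)
      · set t := ⟪p,q⟫/‖p‖^2 with ht
        have hqt : ⟪v, q - t • p⟫ = 0 := by
          rw [inner_sub_right, real_inner_smul_right, hp, hq]; ring
        have e3 : gram2 (g p) (g q) = gram2 (g p) (g (q - t • p)) := by
          rw [← gram2_shift (g p) (g q) t]
          congr 1
          simp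
        have hb1 : ‖g p‖ ≤ secondSing g * ‖p‖ := top_perp_bound g hv hfv hp
        have hb2 : ‖g (q - t • p)‖ ≤ secondSing g * ‖q - t • p‖ := top_perp_bound g hv hfv hqt
        have hσ : secondSing g ≤ ‖g‖ := secondSing_le_norm g
        have hσ0 : 0 ≤ secondSing g := secondSing_nonneg g
        have e4 : gram2 p q = ‖p‖^2 * ‖q - t • p‖^2 := gram2_eq p q hp0
        calc gram2 (g p) (g q) = gram2 (g p) (g (q - t • p)) := e3
        _ ≤ ‖g p‖^2 * ‖g (q - t • p)‖^2 := gram2_le _ _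
        _ ≤ (secondSing g * ‖p‖)^2 * (secondSing g * ‖q - t • p‖)^2 := by
            exact sq_mul_le_sq_mul (norm_nonneg _) (norm_nonneg _) hb1 hb2
        _ = (secondSing g)^2 * (secondSing g)^2 * (‖p‖^2 * ‖q - t • p‖^2) := by ring
        _ ≤ ‖g‖^2 * (secondSing g)^2 * (‖p‖^2 * ‖q - t • p‖^2) := by
            have h5 : (secondSing g)^2 ≤ ‖g‖^2 := by nlinarith
            have hX : (0:ℝ) ≤ ‖p‖^2 * ‖q - t • p‖^2 := by positivity
            exact mul_le_mul_of_nonneg_right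
              (mul_le_mul_of_nonneg_right h5 (sq_nonneg _)) hX
        _ = ‖g‖^2 * (secondSing g)^2 * gram2 p q := by rw [e4]
    · rw [gram2_symm, gram2_symm p q]
      exact gram2_map_le_aux g hv hfv q p hq
  · exact gram2_map_le_aux g hv hfv p q hp

lemma iInf_bdd (x y : E) : BddBelow (Set.range fun a : ℝ => ‖x - a • y‖) :=
  ⟨0, by rintro _ ⟨a, rfl⟩; positivity⟩

lemma projDist_nonneg (x y : E) : 0 ≤ projDist x y :=
  div_nonneg (Real.iInf_nonneg fun a => norm_nonneg _) (norm_nonneg x)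

lemma projDist_le_div (x y : E) (c : ℝ) : projDist x y ≤ ‖x - c • y‖ / ‖x‖ :=
  div_le_div_of_nonneg_right (ciInf_le (iInf_bdd x y) c) (norm_nonneg x)

lemma projDist_le_one (x y : E) (hx : x ≠ 0) : projDist x y ≤ 1 := by
  have h := projDist_le_div x y 0
  simp only [zero_smul, sub_zero] at h
  rw [div_self (norm_ne_zero_iff.mpr hx)] at h
  exact h

lemma ciInf_norm_sub (x y : E) (hy : y ≠ 0) :
    (⨅ a : ℝ, ‖x - a • y‖) = Real.sqrt (‖x‖^2 - ⟪x,y⟫^2/‖y‖^2) := by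
  have hy2 : (0:ℝ) < ‖y‖^2 := pow_pos (norm_pos_iff.mpr hy) 2
  have hyx : ⟪y,x⟫ = ⟪x,y⟫ := real_inner_comm x y
  have expand : ∀ a : ℝ, ‖x - a • y‖^2 = ‖x‖^2 - 2*a*⟪x,y⟫ + a^2*‖y‖^2 := by
    intro a
    rw [← real_inner_self_eq_norm_sq]
    simp only [inner_sub_left, inner_sub_right, inner_smul_left, inner_smul_right,
      RCLike.conj_to_real]
    rw [real_inner_self_eq_norm_sq, real_inner_self_eq_norm_sq, hyx]
    ring
  apply le_antisymm
  · refine le_trans (ciInf_le (iInf_bdd x y) (⟪x,y⟫/‖y‖^2)) (le_of_eq ?_)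
    rw [← Real.sqrt_sq (norm_nonneg (x - (⟪x,y⟫/‖y‖^2) • y))]
    congr 1
    rw [expand]
    field_simp
    ring
  · refine le_ciInf fun a => ?_
    rw [← Real.sqrt_sq (norm_nonneg (x - a • y))]
    apply Real.sqrt_le_sqrt
    rw [expand]
    have h1 : (2*a*⟪x,y⟫ - a^2*‖y‖^2) * ‖y‖^2 ≤ ⟪x,y⟫^2 := by
      nlinarith [sq_nonneg (a*‖y‖^2 - ⟪x,y⟫)]
    have h2 : 2*a*⟪x,y⟫ - a^2*‖y‖^2 ≤ ⟪x,y⟫^2/‖y‖^2 := (le_div_iff₀ hy2).mpr h1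
    linarith

lemma projDist_symm (x y : E) (hx : x ≠ 0) (hy : y ≠ 0) :
    projDist x y = projDist y x := by
  have hx2 : (0:ℝ) < ‖x‖^2 := pow_pos (norm_pos_iff.mpr hx) 2
  have hy2 : (0:ℝ) < ‖y‖^2 := pow_pos (norm_pos_iff.mpr hy) 2
  have hCx : (0:ℝ) ≤ ‖x‖^2 - ⟪x,y⟫^2/‖y‖^2 := by
    rw [sub_nonneg, div_le_iff₀ hy2]
    have h := abs_real_inner_le_norm x y
    nlinarith [abs_nonneg ⟪x,y⟫, sq_abs ⟪x,y⟫, norm_nonneg x, norm_nonneg y]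
  have hCy : (0:ℝ) ≤ ‖y‖^2 - ⟪y,x⟫^2/‖x‖^2 := by
    rw [sub_nonneg, div_le_iff₀ hx2]
    have h := abs_real_inner_le_norm y x
    nlinarith [abs_nonneg ⟪y,x⟫, sq_abs ⟪y,x⟫, norm_nonneg x, norm_nonneg y]
  have e : ∀ (u w : E), u ≠ 0 → w ≠ 0 → (0:ℝ) ≤ ‖u‖^2 - ⟪u,w⟫^2/‖w‖^2 →
      projDist u w = Real.sqrt ((‖u‖^2 - ⟪u,w⟫^2/‖w‖^2) / ‖u‖^2) := by
    intro u w hu hw hC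
    rw [projDist, ciInf_norm_sub u w hw, Real.sqrt_div hC, Real.sqrt_sq (norm_nonneg u)]
  rw [e x y hx hy hCx, e y x hy hx hCy]
  congr 1
  rw [real_inner_comm y x]
  field_simp

end AuxLemmas

open scoped RealInnerProductSpace

/-- alignment increases the squeeze coefficient and pins down the image. -/
theorem statement_14
    {E₁ : Type*} [NormedAddCommGroup E₁] [InnerProductSpace ℝ E₁] [FiniteDimensional ℝ E₁]
    {E₂ : Type*} [NormedAddCommGroup E₂] [InnerProductSpace ℝ E₂] [FiniteDimensional ℝ E₂]
    {E₃ : Type*} [NormedAddCommGroup E₃] [InnerProductSpace ℝ E₃] [FiniteDimensional ℝ E₃]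
    (h : E₁ →L[ℝ] E₂) (g : E₂ →L[ℝ] E₃) (hh : h ≠ 0) (hg : g ≠ 0)
    (ε : ℝ) (hε0 : 0 < ε) (hε1 : ε ≤ 1)
    (hali : ε * (‖g‖ * ‖h‖) ≤ ‖g.comp h‖) :
    ((sqz g : EReal) + (sqz h : EReal) - ((2 * Real.log (1 / ε) : ℝ) : EReal)
        ≤ (sqz (g.comp h) : EReal)) ∧
    (∀ u ∈ Uset 1 g, u ≠ 0 → ∀ u' ∈ Uset 1 (g.comp h), u' ≠ 0 →
      projDist u u' ≤ (1 / ε) * expNeg (sqz g)) := by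
  classical
  have hgn : (0:ℝ) < ‖g‖ := norm_pos_iff.mpr hg
  have hhn : (0:ℝ) < ‖h‖ := norm_pos_iff.mpr hh
  have hghn : (0:ℝ) < ‖g.comp h‖ := lt_of_lt_of_le (by positivity) hali
  have hgh0 : g.comp h ≠ 0 := norm_pos_iff.mp hghn
  obtain ⟨vh, hvh1, hvhtop⟩ := exists_top h hh
  obtain ⟨vg, hvg1, hvgtop⟩ := exists_top g hg
  have hσg0 : 0 ≤ secondSing g := secondSing_nonneg g
  have hσh0 : 0 ≤ secondSing h := secondSing_nonneg h
  have hσgh0 : 0 ≤ secondSing (g.comp h) := secondSing_nonneg (g.comp h)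
  have hσgle : secondSing g ≤ ‖g‖ := secondSing_le_norm g
  have hdegh : secondSing h = 0 → secondSing (g.comp h) = 0 := by
    intro h0
    refine le_antisymm ?_ hσgh0
    refine secondSing_le_of_perp (g.comp h) (innerSL ℝ vh).toLinearMap 0 le_rfl ?_
    intro y hy
    have hy' : ⟪vh, y⟫ = 0 := hy
    have h1 : ‖h y‖ ≤ secondSing h * ‖y‖ := top_perp_bound h hvh1 hvhtop hy'
    rw [h0, zero_mul] at h1
    have h2 : h y = 0 := norm_le_zero_iff.mp h1
    simp [ContinuousLinearMap.comp_apply, h2]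
  have hdegg : secondSing g = 0 → secondSing (g.comp h) = 0 := by
    intro h0
    refine le_antisymm ?_ hσgh0
    refine secondSing_le_of_perp (g.comp h) ((innerSL ℝ vg).comp h).toLinearMap 0 le_rfl ?_
    intro y hy
    have hy' : ⟪vg, h y⟫ = 0 := hy
    have h1 : ‖g (h y)‖ ≤ secondSing g * ‖h y‖ := top_perp_bound g hvg1 hvgtop hy'
    rw [h0, zero_mul] at h1
    simpa [ContinuousLinearMap.comp_apply] using h1
  constructor
  · -- part (i)
    by_cases hgh2 : secondSing (g.comp h) = 0
    · have htop : sqz (g.comp h) = ⊤ := by rw [sqz, if_neg hgh0, if_pos hgh2]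
      rw [htop]
      simp
    · obtain ⟨x₁, hx11, hx1top⟩ := exists_top (g.comp h) hgh0
      have hσg : secondSing g ≠ 0 := fun h0 => hgh2 (hdegg h0)
      have hσh : secondSing h ≠ 0 := fun h0 => hgh2 (hdegh h0)
      have hσgp : 0 < secondSing g := lt_of_le_of_ne hσg0 (Ne.symm hσg)
      have hσhp : 0 < secondSing h := lt_of_le_of_ne hσh0 (Ne.symm hσh)
      have hσghp : 0 < secondSing (g.comp h) := lt_of_le_of_ne hσgh0 (Ne.symm hgh2)
      have hprod : secondSing (g.comp h) ≤ secondSing g * secondSing h / ε := by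
        refine secondSing_le_of_perp (g.comp h) (innerSL ℝ x₁).toLinearMap _
          (by positivity) ?_
        intro y hy
        have hy' : ⟪x₁, y⟫ = 0 := hy
        have horth : ⟪(g.comp h) x₁, (g.comp h) y⟫ = 0 :=
          top_orth (g.comp h) hx11 hx1top hy'
        have hG1 : gram2 ((g.comp h) x₁) ((g.comp h) y)
            = ‖g.comp h‖^2 * ‖(g.comp h) y‖^2 := by
          rw [gram2, horth, hx1top]; ring
        have hG2 : gram2 x₁ y = ‖y‖^2 := by rw [gram2, hy', hx11]; ring
        have step1 : gram2 ((g.comp h) x₁) ((g.comp h) y)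
            ≤ ‖g‖^2 * (secondSing g)^2 * gram2 (h x₁) (h y) := by
          have := gram2_map_le g hvg1 hvgtop (h x₁) (h y)
          simpa [ContinuousLinearMap.comp_apply] using this
        have step2 : gram2 (h x₁) (h y) ≤ ‖h‖^2 * (secondSing h)^2 * gram2 x₁ y :=
          gram2_map_le h hvh1 hvhtop x₁ y
        have chain : ‖g.comp h‖^2 * ‖(g.comp h) y‖^2
            ≤ ‖g‖^2*(secondSing g)^2*(‖h‖^2*(secondSing h)^2*‖y‖^2) := by
          rw [← hG1, ← hG2]
          calc gram2 ((g.comp h) x₁) ((g.comp h) y)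
              ≤ ‖g‖^2 * (secondSing g)^2 * gram2 (h x₁) (h y) := step1
          _ ≤ ‖g‖^2*(secondSing g)^2*(‖h‖^2*(secondSing h)^2* gram2 x₁ y) :=
              mul_le_mul_of_nonneg_left step2 (by positivity)
        have hY0 : (0:ℝ) ≤ ‖g‖*(secondSing g)*‖h‖*(secondSing h)*‖y‖ :=
          mul_nonneg (mul_nonneg (mul_nonneg (mul_nonneg hgn.le hσg0) hhn.le) hσh0)
            (norm_nonneg y)
        have hX0 : (0:ℝ) ≤ ‖g.comp h‖ * ‖(g.comp h) y‖ := by positivity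
        have hXY2 : (‖g.comp h‖ * ‖(g.comp h) y‖)^2
            ≤ (‖g‖*(secondSing g)*‖h‖*(secondSing h)*‖y‖)^2 := by
          have h5 : (‖g.comp h‖ * ‖(g.comp h) y‖)^2
              = ‖g.comp h‖^2 * ‖(g.comp h) y‖^2 := by ring
          have h6 : (‖g‖*(secondSing g)*‖h‖*(secondSing h)*‖y‖)^2
              = ‖g‖^2*(secondSing g)^2*(‖h‖^2*(secondSing h)^2*‖y‖^2) := by ring
          rw [h5, h6]; exact chain
        have hA : ‖g.comp h‖ * ‖(g.comp h) y‖
            ≤ ‖g‖*(secondSing g)*‖h‖*(secondSing h)*‖y‖ := by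
          calc ‖g.comp h‖ * ‖(g.comp h) y‖
              = Real.sqrt ((‖g.comp h‖ * ‖(g.comp h) y‖)^2) := (Real.sqrt_sq hX0).symm
          _ ≤ Real.sqrt ((‖g‖*(secondSing g)*‖h‖*(secondSing h)*‖y‖)^2) :=
              Real.sqrt_le_sqrt hXY2
          _ = ‖g‖*(secondSing g)*‖h‖*(secondSing h)*‖y‖ := Real.sqrt_sq hY0
        have hB : ε * (‖g‖ * ‖h‖) * ‖(g.comp h) y‖ ≤ ‖g.comp h‖ * ‖(g.comp h) y‖ :=
          mul_le_mul_of_nonneg_right hali (norm_nonneg _)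
        have hAB := le_trans hB hA
        rw [div_mul_eq_mul_div, le_div_iff₀ hε0]
        have hc : (0:ℝ) < ‖g‖*‖h‖ := mul_pos hgn hhn
        have h4 : (‖(g.comp h) y‖ * ε) * (‖g‖*‖h‖)
            ≤ (secondSing g * secondSing h * ‖y‖) * (‖g‖*‖h‖) := by
          calc (‖(g.comp h) y‖ * ε) * (‖g‖*‖h‖)
              = ε * (‖g‖ * ‖h‖) * ‖(g.comp h) y‖ := by ring
          _ ≤ ‖g‖*(secondSing g)*‖h‖*(secondSing h)*‖y‖ := hAB
          _ = (secondSing g * secondSing h * ‖y‖) * (‖g‖*‖h‖) := by ring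
        exact le_of_mul_le_mul_right h4 hc
      have hgratio : (1:ℝ) ≤ ‖g‖ / secondSing g := (one_le_div hσgp).mpr hσgle
      have hhratio : (1:ℝ) ≤ ‖h‖ / secondSing h :=
        (one_le_div hσhp).mpr (secondSing_le_norm h)
      have hghratio : (1:ℝ) ≤ ‖g.comp h‖ / secondSing (g.comp h) :=
        (one_le_div hσghp).mpr (secondSing_le_norm (g.comp h))
      have hmain : Real.log (‖g‖/secondSing g) + Real.log (‖h‖/secondSing h)
          - 2*Real.log (1/ε) ≤ Real.log (‖g.comp h‖/secondSing (g.comp h)) := by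
        have hx : (‖g‖/secondSing g) * (‖h‖/secondSing h) * ε^2
            ≤ ‖g.comp h‖/secondSing (g.comp h) := by
          have h1 : ε * (‖g‖*‖h‖) / (secondSing g * secondSing h / ε)
              ≤ ‖g.comp h‖ / secondSing (g.comp h) :=
            div_le_div₀ (norm_nonneg _) hali hσghp hprod
          have h2 : (‖g‖/secondSing g) * (‖h‖/secondSing h) * ε^2
              = ε * (‖g‖*‖h‖) / (secondSing g * secondSing h / ε) := by
            field_simp
          rw [h2]; exact h1
        have hpos : (0:ℝ) < (‖g‖/secondSing g) * (‖h‖/secondSing h) * ε^2 := by positivity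
        have hlog := Real.log_le_log hpos hx
        rw [Real.log_mul (by positivity) (by positivity),
          Real.log_mul (by positivity) (by positivity), Real.log_pow] at hlog
        rw [one_div, Real.log_inv]
        push_cast at hlog
        linarith
      have e1 : sqz g = ENNReal.ofReal (Real.log (‖g‖ / secondSing g)) := by
        rw [sqz, if_neg hg, if_neg hσg]
      have e2 : sqz h = ENNReal.ofReal (Real.log (‖h‖ / secondSing h)) := by
        rw [sqz, if_neg hh, if_neg hσh]
      have e3 : sqz (g.comp h) = ENNReal.ofReal (Real.log (‖g.comp h‖ / secondSing (g.comp h))) := by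
        rw [sqz, if_neg hgh0, if_neg hgh2]
      rw [e1, e2, e3, EReal.coe_ennreal_ofReal, EReal.coe_ennreal_ofReal,
        EReal.coe_ennreal_ofReal,
        max_eq_left (Real.log_nonneg hgratio),
        max_eq_left (Real.log_nonneg hhratio),
        max_eq_left (Real.log_nonneg hghratio),
        ← EReal.coe_add, ← EReal.coe_sub]
      exact_mod_cast hmain
  · -- part (ii)
    rintro u ⟨x, hxV, rfl⟩ hu0 u' ⟨z, hzV, rfl⟩ hu'0
    simp only [Set.mem_setOf_eq, one_mul] at hxV hzV
    by_cases hcase : secondSing g < ‖g‖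
    · -- main case
      have hx0 : x ≠ 0 := by rintro rfl; simp at hu0
      set a := ⟪vg, x⟫ with ha
      set w := x - a • vg with hwdef
      have hwv : ⟪vg, w⟫ = 0 := by
        rw [hwdef, inner_sub_right, real_inner_smul_right, real_inner_self_eq_norm_sq, hvg1]
        simp [ha]
      have hxw : x = a • vg + w := by rw [hwdef]; abel
      have hvgw : ⟪w, vg⟫ = 0 := by rw [← real_inner_comm]; exact hwv
      have hnx : ‖x‖^2 = a^2 + ‖w‖^2 := by
        conv_lhs => rw [hxw]
        rw [← real_inner_self_eq_norm_sq]
        simp only [inner_add_left, inner_add_right, inner_smul_left, inner_smul_right,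
          RCLike.conj_to_real]
        rw [real_inner_self_eq_norm_sq, real_inner_self_eq_norm_sq, hvg1, hwv, hvgw]
        ring
      have horth : ⟪g vg, g w⟫ = 0 := top_orth g hvg1 hvgtop hwv
      have horth' : ⟪g w, g vg⟫ = 0 := by rw [← real_inner_comm]; exact horth
      have hgxw : g x = a • g vg + g w := by
        conv_lhs => rw [hxw]
        simp
      have hngx : ‖g x‖^2 = a^2*‖g‖^2 + ‖g w‖^2 := by
        conv_lhs => rw [hgxw]
        rw [← real_inner_self_eq_norm_sq]
        simp only [inner_add_left, inner_add_right, inner_smul_left, inner_smul_right,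
          RCLike.conj_to_real]
        rw [real_inner_self_eq_norm_sq, real_inner_self_eq_norm_sq, hvgtop, horth, horth']
        ring
      have hgw : ‖g w‖ ≤ secondSing g * ‖w‖ := top_perp_bound g hvg1 hvgtop hwv
      have hw0 : w = 0 := by
        by_contra hw0
        have hwp : 0 < ‖w‖ := norm_pos_iff.mpr hw0
        have h1 : ‖g‖^2*‖x‖^2 ≤ ‖g x‖^2 := by
          have h1a : (‖g‖*‖x‖)*(‖g‖*‖x‖) ≤ ‖g x‖*‖g x‖ :=
            mul_self_le_mul_self (mul_nonneg hgn.le (norm_nonneg x)) hxV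
          calc ‖g‖^2*‖x‖^2 = (‖g‖*‖x‖)*(‖g‖*‖x‖) := by ring
          _ ≤ ‖g x‖*‖g x‖ := h1a
          _ = ‖g x‖^2 := by ring
        rw [hnx, hngx] at h1
        have h2 : ‖g‖^2*‖w‖^2 ≤ ‖g w‖^2 := by linarith [h1]
        have h3 : ‖g w‖^2 ≤ (secondSing g)^2*‖w‖^2 := by
          have h3a : ‖g w‖*‖g w‖ ≤ (secondSing g*‖w‖)*(secondSing g*‖w‖) :=
            mul_self_le_mul_self (norm_nonneg (g w)) hgw
          calc ‖g w‖^2 = ‖g w‖*‖g w‖ := by ring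
          _ ≤ (secondSing g*‖w‖)*(secondSing g*‖w‖) := h3a
          _ = (secondSing g)^2*‖w‖^2 := by ring
        have h5 : secondSing g*secondSing g < ‖g‖*‖g‖ := mul_self_lt_mul_self hσg0 hcase
        have h6 : (0:ℝ) < ‖w‖^2 := by positivity
        have h7 : (secondSing g)^2*‖w‖^2 < ‖g‖^2*‖w‖^2 := by
          have hsq : (secondSing g)^2 < ‖g‖^2 := by rw [sq, sq]; exact h5
          exact mul_lt_mul_of_pos_right hsq h6
        linarith
      have hxa : x = a • vg := by rw [hxw, hw0, add_zero]
      have hua : g x = a • g vg := by rw [hxa, _root_.map_smul]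
      have ha0 : a ≠ 0 := by
        intro h0
        rw [h0, zero_smul] at hua
        exact hu0 hua
      -- u' side
      set y' := h z with hy'def
      have hgy' : (g.comp h) z = g y' := rfl
      have hy'0 : y' ≠ 0 := by
        intro h0
        apply hu'0
        rw [hgy', h0, _root_.map_zero]
      have hu'n : 0 < ‖(g.comp h) z‖ := norm_pos_iff.mpr hu'0
      have hy'V : ε * ‖g‖ * ‖y'‖ ≤ ‖(g.comp h) z‖ := by
        have h1 : ‖y'‖ ≤ ‖h‖*‖z‖ := h.le_opNorm z
        calc ε*‖g‖*‖y'‖ ≤ ε*‖g‖*(‖h‖*‖z‖) := by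
              apply mul_le_mul_of_nonneg_left h1 (by positivity)
        _ = ε*(‖g‖*‖h‖)*‖z‖ := by ring
        _ ≤ ‖g.comp h‖*‖z‖ := mul_le_mul_of_nonneg_right hali (norm_nonneg z)
        _ ≤ ‖(g.comp h) z‖ := hzV
      set b := ⟪vg, y'⟫ with hb
      set w' := y' - b • vg with hw'def
      have hw'v : ⟪vg, w'⟫ = 0 := by
        rw [hw'def, inner_sub_right, real_inner_smul_right, real_inner_self_eq_norm_sq, hvg1]
        simp [hb]
      have hvgw' : ⟪w', vg⟫ = 0 := by rw [← real_inner_comm]; exact hw'v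
      have hy'w : y' = b • vg + w' := by rw [hw'def]; abel
      have hgw' : ‖g w'‖ ≤ secondSing g * ‖w'‖ := top_perp_bound g hvg1 hvgtop hw'v
      have hny' : ‖y'‖^2 = b^2 + ‖w'‖^2 := by
        conv_lhs => rw [hy'w]
        rw [← real_inner_self_eq_norm_sq]
        simp only [inner_add_left, inner_add_right, inner_smul_left, inner_smul_right,
          RCLike.conj_to_real]
        rw [real_inner_self_eq_norm_sq, real_inner_self_eq_norm_sq, hvg1, hw'v, hvgw']
        ring
      have hw'le : ‖w'‖ ≤ ‖y'‖ := by
        have h1 : ‖w'‖^2 ≤ ‖y'‖^2 := by rw [hny']; linarith [sq_nonneg b]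
        calc ‖w'‖ = Real.sqrt (‖w'‖^2) := (Real.sqrt_sq (norm_nonneg _)).symm
        _ ≤ Real.sqrt (‖y'‖^2) := Real.sqrt_le_sqrt h1
        _ = ‖y'‖ := Real.sqrt_sq (norm_nonneg _)
      have hkey : ‖g w'‖ ≤ (secondSing g/(ε*‖g‖)) * ‖(g.comp h) z‖ := by
        have h3 : ‖y'‖ ≤ ‖(g.comp h) z‖/(ε*‖g‖) := by
          rw [le_div_iff₀ (by positivity)]
          calc ‖y'‖ * (ε*‖g‖) = ε*‖g‖*‖y'‖ := by ring
          _ ≤ ‖(g.comp h) z‖ := hy'V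
        calc ‖g w'‖ ≤ secondSing g * ‖w'‖ := hgw'
        _ ≤ secondSing g * ‖y'‖ := mul_le_mul_of_nonneg_left hw'le hσg0
        _ ≤ secondSing g * (‖(g.comp h) z‖/(ε*‖g‖)) :=
            mul_le_mul_of_nonneg_left h3 hσg0
        _ = (secondSing g/(ε*‖g‖)) * ‖(g.comp h) z‖ := by ring
      have hdecomp : (g.comp h) z - (b/a) • (g x) = g w' := by
        rw [hua, smul_smul, div_mul_cancel₀ b ha0, hgy']
        have hgy'w : g y' = b • g vg + g w' := by
          conv_lhs => rw [hy'w]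
          simp
        rw [hgy'w]
        abel
      have hRHSeq : (1/ε) * expNeg (sqz g) = secondSing g/(ε*‖g‖) := by
        by_cases hσ0 : secondSing g = 0
        · rw [sqz, if_neg hg, if_pos hσ0, expNeg, if_pos rfl, hσ0]
          simp
        · have hσp : 0 < secondSing g := lt_of_le_of_ne hσg0 (Ne.symm hσ0)
          have hl : 0 ≤ Real.log (‖g‖/secondSing g) :=
            Real.log_nonneg ((one_le_div hσp).mpr hσgle)
          rw [sqz, if_neg hg, if_neg hσ0, expNeg, if_neg ENNReal.ofReal_ne_top,
            ENNReal.toReal_ofReal hl]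
          have hexp : -Real.log (‖g‖/secondSing g) = Real.log (secondSing g/‖g‖) := by
            rw [← Real.log_inv, inv_div]
          rw [hexp, Real.exp_log (by positivity)]
          field_simp
      have hfinal : projDist ((g.comp h) z) (g x) ≤ (1/ε) * expNeg (sqz g) := by
        rw [hRHSeq]
        have hbnd := projDist_le_div ((g.comp h) z) (g x) (b/a)
        rw [hdecomp] at hbnd
        calc projDist ((g.comp h) z) (g x) ≤ ‖g w'‖/‖(g.comp h) z‖ := hbnd
        _ ≤ ((secondSing g/(ε*‖g‖)) * ‖(g.comp h) z‖)/‖(g.comp h) z‖ :=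
            div_le_div_of_nonneg_right hkey (norm_nonneg _)
        _ = secondSing g/(ε*‖g‖) := mul_div_cancel_right₀ _ (ne_of_gt hu'n)
      rw [projDist_symm (g x) ((g.comp h) z) hu0 hu'0]
      exact hfinal
    · -- degenerate case: ‖g‖ ≤ secondSing g
      rw [not_lt] at hcase
      have hσgp : 0 < secondSing g := lt_of_lt_of_le hgn hcase
      have hsqz : sqz g = 0 := by
        rw [sqz, if_neg hg, if_neg (ne_of_gt hσgp)]
        rw [ENNReal.ofReal_eq_zero]
        exact Real.log_nonpos (by positivity) ((div_le_one hσgp).mpr hcase)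
      rw [hsqz]
      have he : expNeg 0 = 1 := by rw [expNeg, if_neg (by simp)]; simp
      rw [he, mul_one]
      have h1 : projDist (g x) ((g.comp h) z) ≤ 1 := projDist_le_one _ _ hu0
      have h2 : (1:ℝ) ≤ 1/ε := by
        rw [le_div_iff₀ hε0]; linarith
      linarith
end
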